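/- arXiv:1605.04518 — 10 statements merged into one kernel-verified Lean document; each statement's English description precedes it below -/
import Mathlib

section
/- Let V be a real topological vector space, let q : V → ℝ be a continuous weak Minkowski norm, and let P := { p ∈ V' | ⟨p,x⟩ ≤ q(x) for all x ∈ V } be the set of continuous linear forms dominated by q. Denote by ext P the set of extreme points of P and by cl(ext P) its closure with respect to the weak* topology. Then for every x ∈ V, q(x) = sup_{p ∈ ext P} ⟨p,x⟩ = max_{p ∈ cl(ext P)} ⟨p,x⟩, the latter supremum being attained. In particular, if ext P is weak* closed then the supremum of ⟨p,x⟩ over P is attained at an extreme point of P. -/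
/-!
Every `p ∈ P` satisfies `-q (-x) ≤ p x ≤ q x`, and every linear form dominated by `q` is
automatically continuous, so `P` embeds into the product `∏ₓ [-q (-x), q x]` as a closed set and is
weak* compact by Tychonoff. For each `x`, Hahn–Banach on the line `ℝ x` gives some `p ∈ P` with
`p x = q x`, so evaluation at `x` attains its maximum `q x` on `P`. The set of maximisers is a
nonempty compact exposed face of `P`, so by the Krein–Milman lemma it contains an extreme point
of `P`.
-/

open Set Filter Topology

theorem IsCompact.exists_mem_extremePoints_isMaxOn {E : Type*} [AddCommGroup E] [Module ℝ E]
    [TopologicalSpace E] [T2Space E] [IsTopologicalAddGroup E] [ContinuousSMul ℝ E]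
    [LocallyConvexSpace ℝ E] {s : Set E} (hs : IsCompact s) (hne : s.Nonempty) (l : E →L[ℝ] ℝ) :
    ∃ y ∈ s.extremePoints ℝ, IsMaxOn l s y := by
  obtain ⟨z, hzs, hz⟩ := hs.exists_isMaxOn hne l.continuous.continuousOn
  have hexp : IsExposed ℝ s {y ∈ s | ∀ w ∈ s, l w ≤ l y} := fun _ => ⟨l, rfl⟩
  obtain ⟨y, hy⟩ := (hexp.isCompact hs).extremePoints_nonempty ⟨z, hzs, hz⟩
  exact ⟨y, hexp.isExtreme.extremePoints_subset_extremePoints hy,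
    isMaxOn_iff.2 (extremePoints_subset hy).2⟩

theorem neg_map_neg_le_of_subadditive {G : Type*} [AddGroup G] {q : G → ℝ} (hq0 : q 0 = 0)
    (hq_add : ∀ x y : G, q (x + y) ≤ q x + q y) (x : G) : -q (-x) ≤ q x := by
  have := hq_add x (-x)
  rw [add_neg_cancel, hq0] at this
  linarith

section Sublinear

variable {V : Type*} [AddCommGroup V] [Module ℝ V] {q : V → ℝ}

theorem map_zero_of_posHomogeneous (hq_hom : ∀ c : ℝ, 0 ≤ c → ∀ x : V, q (c • x) = c * q x) :
    q 0 = 0 := by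
  simpa using hq_hom 0 le_rfl 0

theorem ConvexOn.map_add_le_of_posHomogeneous (hq_convex : ConvexOn ℝ univ q)
    (hq_hom : ∀ c : ℝ, 0 ≤ c → ∀ x : V, q (c • x) = c * q x) (x y : V) :
    q (x + y) ≤ q x + q y := by
  have hmid := hq_convex.2 (mem_univ x) (mem_univ y) (by norm_num : (0 : ℝ) ≤ 1 / 2)
    (by norm_num : (0 : ℝ) ≤ 1 / 2) (by norm_num)
  calc q (x + y) = q ((2 : ℝ) • ((1 / 2 : ℝ) • x + (1 / 2 : ℝ) • y)) := by congr 1; module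
    _ = 2 * q ((1 / 2 : ℝ) • x + (1 / 2 : ℝ) • y) := hq_hom 2 (by norm_num) _
    _ ≤ q x + q y := by simp only [smul_eq_mul] at hmid; linarith

theorem exists_linearMap_le_apply_eq (hq_hom : ∀ c : ℝ, 0 ≤ c → ∀ x : V, q (c • x) = c * q x)
    (hq_add : ∀ x y : V, q (x + y) ≤ q x + q y) (x : V) :
    ∃ g : V →ₗ[ℝ] ℝ, (∀ y, g y ≤ q y) ∧ g x = q x := by
  have hq0 := map_zero_of_posHomogeneous hq_hom
  let f : V →ₗ.[ℝ] ℝ := LinearPMap.mkSpanSingleton' x (q x) fun c hc => by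
    rcases smul_eq_zero.1 hc with rfl | rfl
    · exact zero_smul ℝ _
    · rw [hq0, smul_zero]
  have hf : ∀ y : f.domain, f y ≤ q y := by
    rintro ⟨_, hy⟩
    obtain ⟨c, rfl⟩ := Submodule.mem_span_singleton.1 hy
    rw [LinearPMap.mkSpanSingleton'_apply]
    change c * q x ≤ q (c • x)
    rcases le_or_gt 0 c with hc | hc
    · exact (hq_hom c hc x).ge
    · -- `c • x = (-c) • (-x)` and `-q (-x) ≤ q x`
      have := neg_map_neg_le_of_subadditive hq0 hq_add x
      rw [← neg_smul_neg, hq_hom (-c) (by linarith)]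
      nlinarith
  obtain ⟨g, hgf, hgq⟩ := exists_extension_of_le_sublinear f q (fun c hc y => hq_hom c hc.le y)
    hq_add hf
  exact ⟨g, hgq, (hgf ⟨x, Submodule.mem_span_singleton_self x⟩).trans
    (LinearPMap.mkSpanSingleton'_apply_self _ _ _ _)⟩

variable [TopologicalSpace V]

theorem LinearMap.continuous_of_le [IsTopologicalAddGroup V] (g : V →ₗ[ℝ] ℝ)
    (hq_cont : Continuous q) (hq0 : q 0 = 0) (hg : ∀ y, g y ≤ q y) : Continuous g := by
  refine continuous_of_continuousAt_zero g ?_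
  have hup : Tendsto q (𝓝 0) (𝓝 0) := hq0 ▸ hq_cont.tendsto 0
  have hlow : Tendsto (fun y => -q (-y)) (𝓝 0) (𝓝 0) := by
    simpa [hq0] using ((hq_cont.comp continuous_neg).tendsto 0).neg
  rw [ContinuousAt, map_zero]
  refine tendsto_of_tendsto_of_tendsto_of_le_of_le hlow hup (fun y => ?_) hg
  simpa using neg_le_neg (hg (-y))

instance WeakDual.instLocallyConvexSpace : LocallyConvexSpace ℝ (WeakDual ℝ V) :=
  WeakBilin.locallyConvexSpace

def dominatedForms (q : V → ℝ) : Set (WeakDual ℝ V) := {p | ∀ x, p x ≤ q x}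

theorem isClosed_dominatedForms (q : V → ℝ) : IsClosed (dominatedForms q) := by
  simp only [dominatedForms, ofPred_forall]
  exact isClosed_iInter fun x => isClosed_le (WeakDual.eval_continuous x) continuous_const

theorem isCompact_dominatedForms [IsTopologicalAddGroup V] (hq_cont : Continuous q)
    (hq0 : q 0 = 0) : IsCompact (dominatedForms q) := by
  let K : Set (V → ℝ) := range ((↑) : (V →ₗ[ℝ] ℝ) → V → ℝ) ∩ {f | ∀ x, f x ≤ q x}
  have hK : IsCompact K := by
    refine (isCompact_univ_pi fun x => isCompact_Icc (a := -q (-x)) (b := q x)).of_isClosed_subset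
      ((LinearMap.isClosed_range_coe V ℝ (RingHom.id ℝ)).inter ?_) ?_
    · simp only [ofPred_forall]
      exact isClosed_iInter fun x => isClosed_le (continuous_apply x) continuous_const
    · rintro _ ⟨⟨g, rfl⟩, hg⟩ x -
      exact ⟨by simpa using neg_le_neg (hg (-x)), hg x⟩
  have himage : ((↑) : WeakDual ℝ V → V → ℝ) '' dominatedForms q = K := by
    refine Subset.antisymm ?_ ?_
    · rintro _ ⟨p, hp, rfl⟩
      exact ⟨⟨p.toLinearMap, rfl⟩, hp⟩
    · rintro _ ⟨⟨g, rfl⟩, hg⟩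
      exact ⟨⟨g, g.continuous_of_le hq_cont hq0 hg⟩, hg, rfl⟩
  exact DFunLike.coe_injective.isEmbedding_induced.isCompact_iff.mpr (himage ▸ hK)

theorem exists_mem_extremePoints_dominatedForms_apply_eq [IsTopologicalAddGroup V]
    (hq_hom : ∀ c : ℝ, 0 ≤ c → ∀ x : V, q (c • x) = c * q x)
    (hq_add : ∀ x y : V, q (x + y) ≤ q x + q y) (hq_cont : Continuous q) (x : V) :
    ∃ p ∈ (dominatedForms q).extremePoints ℝ, p x = q x := by
  have hq0 := map_zero_of_posHomogeneous hq_hom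
  obtain ⟨g, hgq, hgx⟩ := exists_linearMap_le_apply_eq hq_hom hq_add x
  let p₀ : WeakDual ℝ V := ⟨g, g.continuous_of_le hq_cont hq0 hgq⟩
  let l : WeakDual ℝ V →L[ℝ] ℝ := WeakBilin.eval (topDualPairing ℝ V) x
  obtain ⟨p, hp, hmax⟩ := (isCompact_dominatedForms hq_cont hq0).exists_mem_extremePoints_isMaxOn
    ⟨p₀, hgq⟩ l
  exact ⟨p, hp, le_antisymm (extremePoints_subset hp x) (hgx ▸ hmax (show p₀ ∈ _ from hgq))⟩

end Sublinear

theorem stmt2_general {V : Type*} [AddCommGroup V] [Module ℝ V] [TopologicalSpace V]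
    [IsTopologicalAddGroup V]
    (q : V → ℝ) (hq_convex : ConvexOn ℝ Set.univ q)
    (hq_hom : ∀ (c : ℝ), 0 ≤ c → ∀ x : V, q (c • x) = c * q x)
    (hq_cont : Continuous q)
    (P : Set (WeakDual ℝ V)) (hP : P = {p : WeakDual ℝ V | ∀ x : V, p x ≤ q x}) :
    (∀ x : V, IsLUB {r : ℝ | ∃ p ∈ Set.extremePoints ℝ P, r = p x} (q x)) ∧
    (∀ x : V, IsGreatest {r : ℝ | ∃ p ∈ closure (Set.extremePoints ℝ P), r = p x} (q x)) ∧
    (IsClosed (Set.extremePoints ℝ P) →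
      ∀ x : V, ∃ p ∈ Set.extremePoints ℝ P,
        IsGreatest {r : ℝ | ∃ p' ∈ P, r = p' x} (p x)) := by
  obtain rfl : P = dominatedForms q := hP
  have hext := exists_mem_extremePoints_dominatedForms_apply_eq hq_hom
    (hq_convex.map_add_le_of_posHomogeneous hq_hom) hq_cont
  have hclosure : closure ((dominatedForms q).extremePoints ℝ) ⊆ dominatedForms q :=
    closure_minimal extremePoints_subset (isClosed_dominatedForms q)
  refine ⟨fun x => ?_, fun x => ?_, fun _ x => ?_⟩ <;> obtain ⟨p, hp, hpx⟩ := hext x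
  · refine IsGreatest.isLUB ⟨⟨p, hp, hpx.symm⟩, ?_⟩
    rintro _ ⟨p', hp', rfl⟩
    exact extremePoints_subset hp' x
  · refine ⟨⟨p, subset_closure hp, hpx.symm⟩, ?_⟩
    rintro _ ⟨p', hp', rfl⟩
    exact hclosure hp' x
  · refine ⟨p, hp, ⟨p, extremePoints_subset hp, rfl⟩, ?_⟩
    rintro _ ⟨p', hp', rfl⟩
    exact hpx ▸ hp' x

/-- With `P` the set of continuous linear forms dominated by a continuous weak
Minkowski norm `q`, for every `x` we have `q x = sup_{p ∈ ext P} p x = max_{p ∈ cl(ext P)} p x`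
(the latter attained), where `ext P` is the set of extreme points of `P` and the closure is
taken in the weak* topology. Moreover, if `ext P` is weak* closed, then the supremum of `p x`
over `P` is attained at an extreme point of `P`. -/
theorem stmt2 {V : Type*} [AddCommGroup V] [Module ℝ V] [TopologicalSpace V]
    [IsTopologicalAddGroup V] [ContinuousSMul ℝ V]
    (q : V → ℝ) (hq_convex : ConvexOn ℝ Set.univ q)
    (hq_hom : ∀ (c : ℝ), 0 ≤ c → ∀ x : V, q (c • x) = c * q x)
    (hq_cont : Continuous q)
    (P : Set (WeakDual ℝ V)) (hP : P = {p : WeakDual ℝ V | ∀ x : V, p x ≤ q x}) :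
    (∀ x : V, IsLUB {r : ℝ | ∃ p ∈ Set.extremePoints ℝ P, r = p x} (q x)) ∧
    (∀ x : V, IsGreatest {r : ℝ | ∃ p ∈ closure (Set.extremePoints ℝ P), r = p x} (q x)) ∧
    (IsClosed (Set.extremePoints ℝ P) →
      ∀ x : V, ∃ p ∈ Set.extremePoints ℝ P,
        IsGreatest {r : ℝ | ∃ p' ∈ P, r = p' x} (p x)) :=
  stmt2_general q hq_convex hq_hom hq_cont P hP
end

section
/- Let V be a real topological vector space, let q : V → ℝ be a continuous weak Minkowski norm, and let P := { p ∈ V' | ⟨p,x⟩ ≤ q(x) for all x ∈ V }. A function f : V → ℝ is nonexpansive with respect to q if, and only if, for every x ∈ V, f(x) = min_{y ∈ V} max_{p ∈ P} ( ⟨p,x−y⟩ + f(y) ), where the inner maximum over P is attained for each y and the outer infimum over y is attained. -/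
/-!
By Hahn–Banach every continuous sublinear `q` is the pointwise maximum of the continuous linear
forms it dominates, so the inner maximum equals `q (x - y) + f y`. The identity then says that
`f x = min_y (q (x - y) + f y)`, which, as `q 0 = 0`, is exactly nonexpansiveness.
-/

open Set Filter Topology

section Sublinear

variable {E : Type*} [AddCommGroup E] [Module ℝ E]

theorem ConvexOn.map_add_le_add_of_homogeneous {N : E → ℝ} (hN : ConvexOn ℝ univ N)
    (N_hom : ∀ c : ℝ, 0 ≤ c → ∀ x, N (c • x) = c * N x) (x y : E) :
    N (x + y) ≤ N x + N y :=
  calc N (x + y) = N ((2 : ℝ) • ((1 / 2 : ℝ) • x + (1 / 2 : ℝ) • y)) := by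
        congr 1; module
    _ = 2 * N ((1 / 2 : ℝ) • x + (1 / 2 : ℝ) • y) := N_hom 2 zero_le_two _
    _ ≤ 2 * ((1 / 2 : ℝ) • N x + (1 / 2 : ℝ) • N y) := by
        gcongr; exact hN.2 trivial trivial (by norm_num) (by norm_num) (by norm_num)
    _ = N x + N y := by simp only [smul_eq_mul]; ring

/-- Hahn–Banach at a single point: the linear form `c • v ↦ c * N v` on `ℝ ∙ v` is dominated by
`N` because `-N (-v) ≤ N v`, and extends to all of `E`. -/
theorem exists_linearMap_le_sublinear_eq {N : E → ℝ}
    (N_hom : ∀ c : ℝ, 0 < c → ∀ x, N (c • x) = c * N x) (N_add : ∀ x y, N (x + y) ≤ N x + N y)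
    (v : E) : ∃ g : E →ₗ[ℝ] ℝ, (∀ x, g x ≤ N x) ∧ g v = N v := by
  have N_zero : N 0 = 0 := by grind [N_hom 2 (by norm_num) 0, smul_zero]
  have N_neg : -N (-v) ≤ N v := by
    have := N_add v (-v)
    rw [add_neg_cancel, N_zero] at this
    linarith
  have hker : ∀ c : ℝ, c • v = 0 → c • N v = 0 := by
    intro c hc
    rcases smul_eq_zero.1 hc with rfl | rfl
    · exact zero_smul ℝ _
    · rw [N_zero, smul_zero]
  let f := LinearPMap.mkSpanSingleton' (σ := RingHom.id ℝ) v (N v) hker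
  have hf : ∀ x : f.domain, f x ≤ N x := by
    rintro ⟨x, hx⟩
    obtain ⟨c, rfl⟩ := Submodule.mem_span_singleton.1 hx
    change f ⟨c • v, hx⟩ ≤ N (c • v)
    rw [LinearPMap.mkSpanSingleton'_apply, smul_eq_mul, RingHom.id_apply]
    rcases lt_trichotomy c 0 with hc | rfl | hc
    · have : c • v = (-c) • -v := by rw [neg_smul_neg]
      rw [this, N_hom (-c) (neg_pos.2 hc)]
      nlinarith
    · simp [N_zero]
    · rw [N_hom c hc]
  obtain ⟨g, hgf, hgN⟩ := exists_extension_of_le_sublinear f N N_hom N_add hf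
  exact ⟨g, hgN, (hgf ⟨v, Submodule.mem_span_singleton_self v⟩).trans
    (LinearPMap.mkSpanSingleton'_apply_self _ _ _ _)⟩

end Sublinear

section Dual

variable {V : Type*} [AddCommGroup V] [Module ℝ V] [TopologicalSpace V]
  [IsTopologicalAddGroup V]

/-- Squeezed between `-N (-x)` and `N x`, both tending to `N 0 = 0`. -/
theorem LinearMap.continuous_of_le_continuous {φ : V →ₗ[ℝ] ℝ} {N : V → ℝ} (hN : Continuous N)
    (N_zero : N 0 = 0) (hφ : ∀ x, φ x ≤ N x) : Continuous φ := by
  refine continuous_of_continuousAt_zero φ ?_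
  have upper : Tendsto N (𝓝 0) (𝓝 0) := N_zero ▸ hN.tendsto 0
  have lower : Tendsto (fun x ↦ -N (-x)) (𝓝 0) (𝓝 0) := by
    simpa [N_zero] using ((hN.comp continuous_neg).tendsto 0).neg
  rw [ContinuousAt, map_zero]
  refine tendsto_of_tendsto_of_tendsto_of_le_of_le lower upper (fun x ↦ ?_) hφ
  simpa using neg_le_neg (hφ (-x))

variable {q : V → ℝ}

theorem exists_continuousLinearMap_le_eq (hq_convex : ConvexOn ℝ univ q)
    (hq_hom : ∀ c : ℝ, 0 ≤ c → ∀ x, q (c • x) = c * q x) (hq_cont : Continuous q) (v : V) :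
    ∃ p : V →L[ℝ] ℝ, (∀ z, p z ≤ q z) ∧ p v = q v := by
  obtain ⟨g, hgq, hgv⟩ := exists_linearMap_le_sublinear_eq (fun c hc ↦ hq_hom c hc.le)
    (hq_convex.map_add_le_add_of_homogeneous hq_hom) v
  have q_zero : q 0 = 0 := by simpa using hq_hom 0 le_rfl 0
  exact ⟨⟨g, g.continuous_of_le_continuous hq_cont q_zero hgq⟩, hgq, hgv⟩

theorem isGreatest_dominated_apply_add (hq_convex : ConvexOn ℝ univ q)
    (hq_hom : ∀ c : ℝ, 0 ≤ c → ∀ x, q (c • x) = c * q x) (hq_cont : Continuous q)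
    (v : V) (a : ℝ) :
    IsGreatest {s : ℝ | ∃ p : V →L[ℝ] ℝ, (∀ z, p z ≤ q z) ∧ s = p v + a} (q v + a) := by
  obtain ⟨p, hpq, hpv⟩ := exists_continuousLinearMap_le_eq hq_convex hq_hom hq_cont v
  refine ⟨⟨p, hpq, by rw [hpv]⟩, ?_⟩
  rintro _ ⟨p', hp'q, rfl⟩
  exact add_le_add_left (hp'q v) a

end Dual

theorem forall_sub_le_iff_forall_isLeast_range {V : Type*} [AddGroup V] {q f : V → ℝ}
    (q_zero : q 0 = 0) :
    (∀ x y, f x - f y ≤ q (x - y)) ↔ ∀ x, IsLeast (range fun y ↦ q (x - y) + f y) (f x) := by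
  refine ⟨fun h x ↦ ⟨⟨x, by simp [q_zero]⟩, ?_⟩, fun h x y ↦ ?_⟩
  · rintro _ ⟨y, rfl⟩
    linarith [h x y]
  · linarith [(h x).2 ⟨y, rfl⟩]

theorem stmt3_general {V : Type*} [AddCommGroup V] [Module ℝ V] [TopologicalSpace V]
    [IsTopologicalAddGroup V]
    (q : V → ℝ) (hq_convex : ConvexOn ℝ Set.univ q)
    (hq_hom : ∀ (c : ℝ), 0 ≤ c → ∀ x : V, q (c • x) = c * q x)
    (hq_cont : Continuous q) (f : V → ℝ) :
    (∀ x y : V, f x - f y ≤ q (x - y)) ↔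
      ∀ x : V,
        (∀ y : V, ∃ r : ℝ,
          IsGreatest {s : ℝ | ∃ p : V →L[ℝ] ℝ, (∀ z : V, p z ≤ q z) ∧ s = p (x - y) + f y} r) ∧
        IsLeast {r : ℝ | ∃ y : V,
          IsGreatest {s : ℝ | ∃ p : V →L[ℝ] ℝ, (∀ z : V, p z ≤ q z) ∧ s = p (x - y) + f y} r}
          (f x) := by
  have q_zero : q 0 = 0 := by simpa using hq_hom 0 le_rfl 0
  have hmax := fun x y ↦ isGreatest_dominated_apply_add hq_convex hq_hom hq_cont (x - y) (f y)
  have hmin_set : ∀ x, {r : ℝ | ∃ y : V,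
      IsGreatest {s : ℝ | ∃ p : V →L[ℝ] ℝ, (∀ z : V, p z ≤ q z) ∧ s = p (x - y) + f y} r} =
      range fun y ↦ q (x - y) + f y := by
    intro x
    ext r
    exact ⟨fun ⟨y, hy⟩ ↦ ⟨y, (hmax x y).unique hy⟩, fun ⟨y, hy⟩ ↦ ⟨y, hy ▸ hmax x y⟩⟩
  simp only [hmin_set, forall_sub_le_iff_forall_isLeast_range q_zero]
  exact forall_congr' fun x ↦ (and_iff_right fun y ↦ ⟨_, hmax x y⟩).symm

/-- With `P` the set of continuous linear forms dominated by a continuous weak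
Minkowski norm `q`, a function `f : V → ℝ` is nonexpansive with respect to `q` if and only if,
for every `x`, `f x = min_{y} max_{p ∈ P} (p (x - y) + f y)`, the inner maximum over `P`
being attained for each `y` and the outer minimum over `y` being attained. -/
theorem stmt3 {V : Type*} [AddCommGroup V] [Module ℝ V] [TopologicalSpace V]
    [IsTopologicalAddGroup V] [ContinuousSMul ℝ V]
    (q : V → ℝ) (hq_convex : ConvexOn ℝ Set.univ q)
    (hq_hom : ∀ (c : ℝ), 0 ≤ c → ∀ x : V, q (c • x) = c * q x)
    (hq_cont : Continuous q) (f : V → ℝ) :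
    (∀ x y : V, f x - f y ≤ q (x - y)) ↔
      ∀ x : V,
        (∀ y : V, ∃ r : ℝ,
          IsGreatest {s : ℝ | ∃ p : V →L[ℝ] ℝ, (∀ z : V, p z ≤ q z) ∧ s = p (x - y) + f y} r) ∧
        IsLeast {r : ℝ | ∃ y : V,
          IsGreatest {s : ℝ | ∃ p : V →L[ℝ] ℝ, (∀ z : V, p z ≤ q z) ∧ s = p (x - y) + f y} r}
          (f x) :=
  stmt3_general q hq_convex hq_hom hq_cont f
end

section
/- A function f : ℝⁿ → ℝ is monotone and additively homogeneous if, and only if, for every x ∈ ℝⁿ, f(x) = min_{y ∈ ℝⁿ} max_{1 ≤ j ≤ n} ( x_j − y_j + f(y) ), the infimum over y being attained. -/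
/-- A function `f : ℝⁿ → ℝ` is monotone and additively homogeneous if and only
if, for every `x`, `f x = min_{y} max_{j} (x j - y j + f y)`, the minimum over `y` being
attained (the maximum over the finitely many coordinates `j` is always attained). -/
theorem stmt8 {n : ℕ} (hn : 0 < n) (f : (Fin n → ℝ) → ℝ) :
    (Monotone f ∧ ∀ (x : Fin n → ℝ) (c : ℝ), f (x + c • (1 : Fin n → ℝ)) = f x + c) ↔
      ∀ x : Fin n → ℝ,
        IsLeast {r : ℝ | ∃ y : Fin n → ℝ, r = ⨆ j : Fin n, (x j - y j + f y)} (f x) := by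
  haveI : Nonempty (Fin n) := ⟨⟨0, hn⟩⟩
  constructor
  · rintro ⟨hmono, hhom⟩ x
    constructor
    · exact ⟨x, by simp⟩
    · rintro r ⟨y, rfl⟩
      set c : ℝ := ⨆ j : Fin n, (x j - y j) with hc
      have hbdd : BddAbove (Set.range fun j : Fin n => x j - y j) :=
        (Set.finite_range _).bddAbove
      have hle : x ≤ y + c • (1 : Fin n → ℝ) := by
        intro j
        have := le_ciSup hbdd j
        simp only [Pi.add_apply, Pi.smul_apply, Pi.one_apply, smul_eq_mul, mul_one]
        linarith
      have h1 : f x ≤ f y + c := by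
        calc f x ≤ f (y + c • (1 : Fin n → ℝ)) := hmono hle
        _ = f y + c := hhom y c
      have h2 : (⨆ j : Fin n, (x j - y j + f y)) = c + f y := by
        rw [hc, ciSup_add hbdd]
      rw [h2]; linarith
  · intro h
    constructor
    · intro x y hxy
      have h1 := (h x).2 ⟨y, rfl⟩
      have h2 : (⨆ j : Fin n, (x j - y j + f y)) ≤ f y := by
        apply ciSup_le
        intro j
        have := hxy j
        linarith
      exact h1.trans h2
    · intro x c
      have h1 : f (x + c • (1 : Fin n → ℝ)) ≤ f x + c := by
        have := (h (x + c • (1 : Fin n → ℝ))).2 ⟨x, rfl⟩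
        simpa [add_comm] using this
      have h2 : f x ≤ f (x + c • (1 : Fin n → ℝ)) - c := by
        have := (h x).2 ⟨x + c • (1 : Fin n → ℝ), rfl⟩
        simp only [Pi.add_apply, Pi.smul_apply, Pi.one_apply, smul_eq_mul, mul_one] at this
        have heq : (⨆ j : Fin n, (x j - (x j + c) + f (x + c • (1 : Fin n → ℝ))))
            = f (x + c • (1 : Fin n → ℝ)) - c := by
          have : ∀ j : Fin n, x j - (x j + c) + f (x + c • (1 : Fin n → ℝ))
              = f (x + c • (1 : Fin n → ℝ)) - c := by intro j; ring
          simp only [this, ciSup_const]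
        linarith [this.trans_eq heq]
      linarith
end

section
/- Let Δₙ denote the standard simplex of ℝⁿ, i.e., the set of vectors p ∈ ℝⁿ with nonnegative entries summing to 1. A function f : ℝⁿ → ℝ is monotone and additively homogeneous if, and only if, for every x ∈ ℝⁿ, f(x) = min_{y ∈ ℝⁿ, f(y)=0} max_{p ∈ Δₙ} ⟨p, x−y⟩, where ⟨·,·⟩ is the usual scalar product on ℝⁿ, both the minimum (over the set of y with f(y)=0) and the maximum being attained. -/
/-!
Over the simplex, the linear form `p ↦ ⟨p, v⟩` is maximised at a vertex, so
`max_{p ∈ Δₙ} ⟨p, x - y⟩ = maxᵢ (xᵢ - yᵢ)`, which is the least `t` with `x ≤ y + t𝟙`.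
If `f` is monotone and additively homogeneous and `f y = 0`, then `f x ≤ f (y + t𝟙) = t` for
that `t`, with equality for `y = x - f(x)𝟙`. Conversely, each `x ↦ maxᵢ (xᵢ - yᵢ)` is monotone
and additively homogeneous, and both properties pass to a pointwise minimum.
-/

open Finset

variable {ι : Type*} [Fintype ι] [Nonempty ι]

noncomputable def maxCoord (v : ι → ℝ) : ℝ :=
  univ.sup' univ_nonempty v

theorem le_maxCoord (v : ι → ℝ) (i : ι) : v i ≤ maxCoord v :=
  le_sup' v (mem_univ i)

theorem maxCoord_mono : Monotone (maxCoord : (ι → ℝ) → ℝ) :=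
  fun _ _ h => sup'_mono_fun fun i _ => h i

theorem maxCoord_add_smul_one (v : ι → ℝ) (c : ℝ) :
    maxCoord (v + c • (1 : ι → ℝ)) = maxCoord v + c := by
  simp only [maxCoord, sup'_add]
  congr 1
  ext i
  simp

theorem maxCoord_smul_one (c : ℝ) : maxCoord (c • (1 : ι → ℝ)) = c := by
  simp [maxCoord]

theorem le_add_maxCoord_sub_smul_one (x y : ι → ℝ) : x ≤ y + maxCoord (x - y) • 1 := by
  intro i
  have := le_maxCoord (x - y) i
  simp only [Pi.sub_apply] at this
  simp only [Pi.add_apply, Pi.smul_apply, Pi.one_apply, smul_eq_mul, mul_one]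
  linarith

theorem isGreatest_stdSimplex_sum_mul (v : ι → ℝ) :
    IsGreatest {s : ℝ | ∃ p ∈ stdSimplex ℝ ι, s = ∑ j, p j * v j} (maxCoord v) := by
  classical
  obtain ⟨j₀, -, hj₀⟩ := exists_mem_eq_sup' univ_nonempty v
  refine ⟨⟨Pi.single j₀ 1, single_mem_stdSimplex ℝ j₀, ?_⟩, ?_⟩
  · simp [maxCoord, hj₀, Pi.single_apply]
  · rintro s ⟨p, ⟨hp₀, hp₁⟩, rfl⟩
    calc ∑ j, p j * v j ≤ ∑ j, p j * maxCoord v :=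
          sum_le_sum fun j _ => mul_le_mul_of_nonneg_left (le_maxCoord v j) (hp₀ j)
      _ = maxCoord v := by rw [← sum_mul, hp₁, one_mul]

section

variable {f : (ι → ℝ) → ℝ}

theorem isLeast_maxCoord_sub_of_monotone (hmono : Monotone f)
    (hhom : ∀ x c, f (x + c • (1 : ι → ℝ)) = f x + c) (x : ι → ℝ) :
    IsLeast {r | ∃ y, f y = 0 ∧ r = maxCoord (x - y)} (f x) := by
  refine ⟨⟨x + (-f x) • 1, by rw [hhom]; ring, ?_⟩, ?_⟩
  · rw [sub_add_eq_sub_sub, sub_self, zero_sub, ← neg_smul, neg_neg, maxCoord_smul_one]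
  · rintro r ⟨y, hy, rfl⟩
    calc f x ≤ f (y + maxCoord (x - y) • 1) := hmono (le_add_maxCoord_sub_smul_one x y)
      _ = maxCoord (x - y) := by rw [hhom, hy, zero_add]

variable (hf : ∀ x, IsLeast {r | ∃ y, f y = 0 ∧ r = maxCoord (x - y)} (f x))
include hf

theorem monotone_of_isLeast_maxCoord_sub : Monotone f := by
  intro x x' hxx'
  obtain ⟨y, hy, hx'⟩ := (hf x').1
  calc f x ≤ maxCoord (x - y) := (hf x).2 ⟨y, hy, rfl⟩
    _ ≤ maxCoord (x' - y) := maxCoord_mono (sub_le_sub_right hxx' y)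
    _ = f x' := hx'.symm

theorem add_smul_one_of_isLeast_maxCoord_sub (x : ι → ℝ) (c : ℝ) :
    f (x + c • (1 : ι → ℝ)) = f x + c := by
  have hshift : ∀ y, maxCoord (x + c • 1 - y) = maxCoord (x - y) + c := fun y => by
    rw [add_sub_right_comm, maxCoord_add_smul_one]
  apply le_antisymm
  · obtain ⟨y, hy, hx⟩ := (hf x).1
    exact (hf _).2 ⟨y, hy, by rw [hshift, hx]⟩
  · obtain ⟨y, hy, hxc⟩ := (hf (x + c • 1)).1
    have := (hf x).2 ⟨y, hy, rfl⟩
    rw [hxc, hshift]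
    linarith

end

/-- With `Δₙ` the standard simplex of `ℝⁿ`, a function `f : ℝⁿ → ℝ` is monotone
and additively homogeneous if and only if, for every `x`,
`f x = min_{y : f y = 0} max_{p ∈ Δₙ} ⟨p, x - y⟩`, both the minimum (over those `y` with
`f y = 0`) and the inner maximum being attained. -/
theorem stmt9 {n : ℕ} (hn : 0 < n) (f : (Fin n → ℝ) → ℝ) :
    (Monotone f ∧ ∀ (x : Fin n → ℝ) (c : ℝ), f (x + c • (1 : Fin n → ℝ)) = f x + c) ↔
      ∀ x : Fin n → ℝ,
        (∀ y : Fin n → ℝ, f y = 0 → ∃ r : ℝ,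
          IsGreatest {s : ℝ | ∃ p : Fin n → ℝ,
            ((∀ i, 0 ≤ p i) ∧ ∑ i, p i = 1) ∧ s = ∑ j, p j * (x j - y j)} r) ∧
        IsLeast {r : ℝ | ∃ y : Fin n → ℝ, f y = 0 ∧
          IsGreatest {s : ℝ | ∃ p : Fin n → ℝ,
            ((∀ i, 0 ≤ p i) ∧ ∑ i, p i = 1) ∧ s = ∑ j, p j * (x j - y j)} r} (f x) := by
  have : Nonempty (Fin n) := Fin.pos_iff_nonempty.mp hn
  have hmax (x y : Fin n → ℝ) := isGreatest_stdSimplex_sum_mul (x - y)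
  have hsets (x : Fin n → ℝ) :
      {r : ℝ | ∃ y : Fin n → ℝ, f y = 0 ∧
        IsGreatest {s : ℝ | ∃ p : Fin n → ℝ,
          ((∀ i, 0 ≤ p i) ∧ ∑ i, p i = 1) ∧ s = ∑ j, p j * (x j - y j)} r} =
      {r | ∃ y, f y = 0 ∧ r = maxCoord (x - y)} := by
    ext r
    exact exists_congr fun y => and_congr_right fun _ =>
      ⟨fun h => h.unique (hmax x y), fun h => h ▸ hmax x y⟩
  simp only [hsets]
  constructor
  · rintro ⟨hmono, hhom⟩ x
    exact ⟨fun y _ => ⟨_, hmax x y⟩, isLeast_maxCoord_sub_of_monotone hmono hhom x⟩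
  · intro h
    have hf x := (h x).2
    exact ⟨monotone_of_isLeast_maxCoord_sub hf, add_smul_one_of_isLeast_maxCoord_sub hf⟩
end

section
/- Let V be a real topological vector space, let q : V → ℝ be a continuous weak Minkowski norm, let P := { p ∈ V' | ⟨p,x⟩ ≤ q(x) for all x ∈ V }, and for y ∈ V let P_y := { p ∈ P | ⟨p,y⟩ ≤ f(y) }. A function f : V → ℝ is positively homogeneous and nonexpansive with respect to q if, and only if, for every x ∈ V, f(x) = min_{y ∈ V} max_{p ∈ P_y} ⟨p,x⟩, where the inner maximum over P_y is attained for each y and the outer infimum over y is attained. -/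
/-!
For `y ∈ V` and `a ≥ -q(-y)` the function `N z = inf_{t ≥ 0} (t a + q (z - t y))` is the largest
sublinear minorant of `q` with `N y ≤ a`. Every `p ∈ P` with `p y ≤ a` lies below `N`, and by
Hahn–Banach some such `p` (continuous because `-q(-z) ≤ p z ≤ q z`) attains `N x`; so the inner
maximum at `y` exists and equals `N x`. For `a = f y` with `f` homogeneous and nonexpansive,
`f z - t f y = f z - f (t y) ≤ q (z - t y)` gives `f ≤ N`, with equality at `x = y`.

Conversely, the representation gives for all `x, y` some `p ∈ P` with `p y ≤ f y` and
`f x ≤ p x`. Then `f x - f y ≤ p (x - y) ≤ q (x - y)`, and for `x = c y` also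
`f (c y) ≤ c f y`; applying this to `c⁻¹` as well gives homogeneity.
-/

open Filter Topology

section Sublinear

variable {E : Type*} [AddCommGroup E] [Module ℝ E]

theorem ConvexOn.map_add_le_add_of_homogeneous_s11 {q : E → ℝ} (hq : ConvexOn ℝ Set.univ q)
    (hq_hom : ∀ c : ℝ, 0 ≤ c → ∀ x, q (c • x) = c * q x) (x y : E) :
    q (x + y) ≤ q x + q y := by
  have h := hq.2 (Set.mem_univ x) (Set.mem_univ y) (by norm_num : (0 : ℝ) ≤ 1 / 2)
    (by norm_num : (0 : ℝ) ≤ 1 / 2) (by norm_num)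
  simp only [smul_eq_mul] at h
  calc q (x + y) = 2 * q ((1 / 2 : ℝ) • x + (1 / 2 : ℝ) • y) := by
        rw [← hq_hom 2 zero_le_two, smul_add, smul_smul, smul_smul]; norm_num
    _ ≤ q x + q y := by linarith

theorem map_smul_eq_of_map_smul_le {f : E → ℝ} (h : ∀ c : ℝ, 0 < c → ∀ x, f (c • x) ≤ c * f x)
    (c : ℝ) (hc : 0 < c) (x : E) : f (c • x) = c * f x := by
  refine le_antisymm (h c hc x) ((le_inv_mul_iff₀ hc).1 ?_)
  simpa [inv_smul_smul₀ hc.ne'] using h c⁻¹ (inv_pos.2 hc) (c • x)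

theorem map_zero_of_homogeneous {N : E → ℝ}
    (N_hom : ∀ c : ℝ, 0 < c → ∀ x, N (c • x) = c * N x) : N 0 = 0 := by
  have h := N_hom 2 two_pos 0
  rw [smul_zero] at h
  linarith

theorem mul_le_map_smul_of_sublinear {N : E → ℝ}
    (N_hom : ∀ c : ℝ, 0 < c → ∀ x, N (c • x) = c * N x) (N_add : ∀ x y, N (x + y) ≤ N x + N y)
    (c : ℝ) (x : E) : c * N x ≤ N (c • x) := by
  have N_zero := map_zero_of_homogeneous N_hom
  rcases lt_trichotomy c 0 with hc | rfl | hc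
  · have h := N_add (c • x) ((-c) • x)
    rw [← add_smul, add_neg_cancel, zero_smul, N_zero, N_hom (-c) (neg_pos.2 hc)] at h
    linarith
  · simp [N_zero]
  · exact (N_hom c hc x).ge

theorem exists_linearMap_le_apply_eq_of_sublinear {N : E → ℝ}
    (N_hom : ∀ c : ℝ, 0 < c → ∀ x, N (c • x) = c * N x) (N_add : ∀ x y, N (x + y) ≤ N x + N y)
    (x : E) : ∃ g : E →ₗ[ℝ] ℝ, (∀ z, g z ≤ N z) ∧ g x = N x := by
  have hker : ∀ c : ℝ, c • x = 0 → c • N x = 0 := fun c hc => by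
    rcases smul_eq_zero.1 hc with rfl | rfl
    · exact zero_smul ℝ _
    · rw [map_zero_of_homogeneous N_hom, smul_zero]
  let g₀ := LinearPMap.mkSpanSingleton' (σ := RingHom.id ℝ) x (N x) hker
  have hg₀ : ∀ u : g₀.domain, g₀ u ≤ N u := by
    rintro ⟨u, hu⟩
    obtain ⟨c, rfl⟩ := Submodule.mem_span_singleton.1 hu
    rw [LinearPMap.mkSpanSingleton'_apply, RingHom.id_apply, smul_eq_mul]
    exact mul_le_map_smul_of_sublinear N_hom N_add c x
  obtain ⟨g, hg_ext, hg_le⟩ := exists_extension_of_le_sublinear g₀ N N_hom N_add hg₀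
  exact ⟨g, hg_le, (hg_ext ⟨x, Submodule.mem_span_singleton_self x⟩).trans
    (LinearPMap.mkSpanSingleton'_apply_self _ _ _ _)⟩

end Sublinear

theorem LinearMap.continuous_of_le_s11 {E : Type*} [AddCommGroup E] [Module ℝ E] [TopologicalSpace E]
    [IsTopologicalAddGroup E] {q : E → ℝ} (hq : Continuous q) (hq_zero : q 0 = 0)
    (g : E →ₗ[ℝ] ℝ) (hg : ∀ z, g z ≤ q z) : Continuous g := by
  refine continuous_of_continuousAt_zero g ?_
  rw [ContinuousAt, map_zero]
  have hup : Tendsto q (𝓝 0) (𝓝 0) := hq_zero ▸ hq.tendsto 0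
  have hlow : Tendsto (fun z => -q (-z)) (𝓝 0) (𝓝 0) := by
    simpa [hq_zero] using ((hq.comp continuous_neg).tendsto (0 : E)).neg
  refine tendsto_of_tendsto_of_tendsto_of_le_of_le hlow hup (fun z => ?_) hg
  simpa [neg_le] using hg (-z)

noncomputable def rayInf {E : Type*} [AddCommGroup E] [Module ℝ E] (q : E → ℝ) (y : E) (a : ℝ)
    (z : E) : ℝ :=
  sInf ((fun t : ℝ => t * a + q (z - t • y)) '' Set.Ici 0)

section RayInf

variable {E : Type*} [AddCommGroup E] [Module ℝ E] {q : E → ℝ} {y : E} {a : ℝ}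

theorem le_rayInf {b : ℝ} {z : E} (h : ∀ t : ℝ, 0 ≤ t → b ≤ t * a + q (z - t • y)) :
    b ≤ rayInf q y a z :=
  le_csInf (Set.nonempty_Ici.image _) (Set.forall_mem_image.2 h)

theorem rayInf_le (hq_hom : ∀ c : ℝ, 0 ≤ c → ∀ x, q (c • x) = c * q x)
    (hq_add : ∀ x y, q (x + y) ≤ q x + q y) (ha : -q (-y) ≤ a) (z : E) {t : ℝ} (ht : 0 ≤ t) :
    rayInf q y a z ≤ t * a + q (z - t • y) := by
  refine csInf_le ⟨-q (-z), Set.forall_mem_image.2 fun s (hs : 0 ≤ s) => ?_⟩ ⟨t, ht, rfl⟩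
  have h_tri := hq_add (-z) (z - s • y)
  rw [show -z + (z - s • y) = s • -y by rw [smul_neg]; abel, hq_hom s hs] at h_tri
  nlinarith

theorem rayInf_le_self (hq_hom : ∀ c : ℝ, 0 ≤ c → ∀ x, q (c • x) = c * q x)
    (hq_add : ∀ x y, q (x + y) ≤ q x + q y) (ha : -q (-y) ≤ a) (z : E) : rayInf q y a z ≤ q z := by
  simpa using rayInf_le hq_hom hq_add ha z le_rfl

theorem rayInf_self_le (hq_hom : ∀ c : ℝ, 0 ≤ c → ∀ x, q (c • x) = c * q x)
    (hq_add : ∀ x y, q (x + y) ≤ q x + q y) (ha : -q (-y) ≤ a) : rayInf q y a y ≤ a := by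
  have hq_zero : q 0 = 0 := by simpa using hq_hom 0 le_rfl 0
  simpa [hq_zero] using rayInf_le hq_hom hq_add ha y zero_le_one

theorem rayInf_add_le (hq_hom : ∀ c : ℝ, 0 ≤ c → ∀ x, q (c • x) = c * q x)
    (hq_add : ∀ x y, q (x + y) ≤ q x + q y) (ha : -q (-y) ≤ a) (z w : E) :
    rayInf q y a (z + w) ≤ rayInf q y a z + rayInf q y a w := by
  have key : ∀ s, 0 ≤ s → ∀ t, 0 ≤ t →
      rayInf q y a (z + w) ≤ (s * a + q (z - s • y)) + (t * a + q (w - t • y)) := by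
    intro s hs t ht
    have h_split : z + w - (s + t) • y = (z - s • y) + (w - t • y) := by rw [add_smul]; abel
    calc rayInf q y a (z + w) ≤ (s + t) * a + q (z + w - (s + t) • y) :=
          rayInf_le hq_hom hq_add ha _ (add_nonneg hs ht)
      _ ≤ (s * a + q (z - s • y)) + (t * a + q (w - t • y)) := by
          rw [h_split]; linarith [hq_add (z - s • y) (w - t • y)]
  have h_sub : rayInf q y a (z + w) - rayInf q y a w ≤ rayInf q y a z :=
    le_rayInf fun s hs => by
      have : rayInf q y a (z + w) - (s * a + q (z - s • y)) ≤ rayInf q y a w :=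
        le_rayInf fun t ht => by linarith [key s hs t ht]
      linarith
  linarith

theorem rayInf_smul (hq_hom : ∀ c : ℝ, 0 ≤ c → ∀ x, q (c • x) = c * q x)
    (hq_add : ∀ x y, q (x + y) ≤ q x + q y) (ha : -q (-y) ≤ a) (c : ℝ) (hc : 0 < c) (z : E) :
    rayInf q y a (c • z) = c * rayInf q y a z := by
  refine map_smul_eq_of_map_smul_le (fun c hc z => ?_) c hc z
  refine (inv_mul_le_iff₀ hc).1 (le_rayInf fun t ht => (inv_mul_le_iff₀ hc).2 ?_)
  calc rayInf q y a (c • z) ≤ (c * t) * a + q (c • z - (c * t) • y) :=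
        rayInf_le hq_hom hq_add ha _ (mul_nonneg hc.le ht)
    _ = c * (t * a + q (z - t • y)) := by rw [mul_smul, ← smul_sub, hq_hom c hc.le]; ring

theorem LinearMap.apply_le_rayInf (p : E →ₗ[ℝ] ℝ) (hpq : ∀ z, p z ≤ q z) (hpy : p y ≤ a) (z : E) :
    p z ≤ rayInf q y a z :=
  le_rayInf fun t ht => by
    have h_lin : p z = t * p y + p (z - t • y) := by simp
    nlinarith [hpq (z - t • y)]

theorem isGreatest_rayInf [TopologicalSpace E] [IsTopologicalAddGroup E] (hq : Continuous q)
    (hq_hom : ∀ c : ℝ, 0 ≤ c → ∀ x, q (c • x) = c * q x)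
    (hq_add : ∀ x y, q (x + y) ≤ q x + q y) (ha : -q (-y) ≤ a) (x : E) :
    IsGreatest {s : ℝ | ∃ p : E →L[ℝ] ℝ, ((∀ z : E, p z ≤ q z) ∧ p y ≤ a) ∧ s = p x}
      (rayInf q y a x) := by
  obtain ⟨g, hg, hgx⟩ := exists_linearMap_le_apply_eq_of_sublinear
    (rayInf_smul hq_hom hq_add ha) (rayInf_add_le hq_hom hq_add ha) x
  have hgq : ∀ z, g z ≤ q z := fun z => (hg z).trans (rayInf_le_self hq_hom hq_add ha z)
  have hq_zero : q 0 = 0 := by simpa using hq_hom 0 le_rfl 0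
  refine ⟨⟨⟨g, g.continuous_of_le_s11 hq hq_zero hgq⟩,
    ⟨hgq, (hg y).trans (rayInf_self_le hq_hom hq_add ha)⟩, hgx.symm⟩, ?_⟩
  rintro _ ⟨p, ⟨hpq, hpy⟩, rfl⟩
  exact (p : E →ₗ[ℝ] ℝ).apply_le_rayInf hpq hpy x

end RayInf

section Nonexpansive

variable {E : Type*} [AddCommGroup E] [Module ℝ E] {q f : E → ℝ}

theorem le_rayInf_of_nonexpansive (hf_hom : ∀ c : ℝ, 0 ≤ c → ∀ x, f (c • x) = c * f x)
    (hf_ne : ∀ x y, f x - f y ≤ q (x - y)) (y z : E) : f z ≤ rayInf q y (f y) z :=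
  le_rayInf fun t ht => by linarith [hf_ne z (t • y), hf_hom t ht y]

theorem homogeneous_and_nonexpansive_of_exists_dual
    (h : ∀ x y, ∃ p : E →ₗ[ℝ] ℝ, (∀ z, p z ≤ q z) ∧ p y ≤ f y ∧ f x ≤ p x) :
    (∀ c : ℝ, 0 ≤ c → ∀ x, f (c • x) = c * f x) ∧ ∀ x y, f x - f y ≤ q (x - y) := by
  have h_smul_le : ∀ c : ℝ, 0 ≤ c → ∀ x, f (c • x) ≤ c * f x := fun c hc x => by
    obtain ⟨p, -, hpy, hpx⟩ := h (c • x) x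
    rw [map_smul, smul_eq_mul] at hpx
    nlinarith
  have hf_zero : f 0 = 0 := by
    obtain ⟨p, -, hp0, -⟩ := h 0 0
    exact le_antisymm (by simpa using h_smul_le 0 le_rfl 0) (by simpa using hp0)
  refine ⟨fun c hc x => ?_, fun x y => ?_⟩
  · rcases hc.eq_or_lt with rfl | hc
    · simp [hf_zero]
    · exact map_smul_eq_of_map_smul_le (fun c hc => h_smul_le c hc.le) c hc x
  · obtain ⟨p, hpq, hpy, hpx⟩ := h x y
    linarith [hpq (x - y), map_sub p x y]

end Nonexpansive

theorem stmt11_general {V : Type*} [AddCommGroup V] [Module ℝ V] [TopologicalSpace V]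
    [IsTopologicalAddGroup V]
    (q : V → ℝ) (hq_convex : ConvexOn ℝ Set.univ q)
    (hq_hom : ∀ (c : ℝ), 0 ≤ c → ∀ x : V, q (c • x) = c * q x)
    (hq_cont : Continuous q) (f : V → ℝ) :
    ((∀ (c : ℝ), 0 ≤ c → ∀ x : V, f (c • x) = c * f x) ∧
        ∀ x y : V, f x - f y ≤ q (x - y)) ↔
      ∀ x : V,
        (∀ y : V, ∃ r : ℝ,
          IsGreatest {s : ℝ | ∃ p : V →L[ℝ] ℝ,
            ((∀ z : V, p z ≤ q z) ∧ p y ≤ f y) ∧ s = p x} r) ∧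
        IsLeast {r : ℝ | ∃ y : V,
          IsGreatest {s : ℝ | ∃ p : V →L[ℝ] ℝ,
            ((∀ z : V, p z ≤ q z) ∧ p y ≤ f y) ∧ s = p x} r} (f x) := by
  have hq_add := hq_convex.map_add_le_add_of_homogeneous_s11 hq_hom
  constructor
  · rintro ⟨hf_hom, hf_ne⟩ x
    have hf_zero : f 0 = 0 := by simpa using hf_hom 0 le_rfl 0
    have ha : ∀ y, -q (-y) ≤ f y := fun y => by
      have h := hf_ne 0 y
      simp only [hf_zero, zero_sub] at h
      linarith
    have h_max := fun y => isGreatest_rayInf hq_cont hq_hom hq_add (ha y) x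
    have h_diag : rayInf q x (f x) x = f x := le_antisymm
      (rayInf_self_le hq_hom hq_add (ha x)) (le_rayInf_of_nonexpansive hf_hom hf_ne x x)
    refine ⟨fun y => ⟨_, h_max y⟩, ⟨x, by simpa only [h_diag] using h_max x⟩, ?_⟩
    rintro r ⟨y, hy⟩
    exact hy.unique (h_max y) ▸ le_rayInf_of_nonexpansive hf_hom hf_ne y x
  · intro h
    refine homogeneous_and_nonexpansive_of_exists_dual fun x y => ?_
    obtain ⟨r, hr⟩ := (h x).1 y
    obtain ⟨p, ⟨hpq, hpy⟩, rfl⟩ := hr.1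
    exact ⟨p, hpq, hpy, (h x).2.2 ⟨y, hr⟩⟩

/-- With `P` the set of continuous linear forms dominated by a continuous weak
Minkowski norm `q`, and `P_y := {p ∈ P | p y ≤ f y}`, a function `f : V → ℝ` is positively
homogeneous and nonexpansive with respect to `q` if and only if, for every `x`,
`f x = min_{y} max_{p ∈ P_y} p x`, the inner maximum over `P_y` being attained for each `y`
and the outer minimum over `y` being attained. -/
theorem stmt11 {V : Type*} [AddCommGroup V] [Module ℝ V] [TopologicalSpace V]
    [IsTopologicalAddGroup V] [ContinuousSMul ℝ V]
    (q : V → ℝ) (hq_convex : ConvexOn ℝ Set.univ q)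
    (hq_hom : ∀ (c : ℝ), 0 ≤ c → ∀ x : V, q (c • x) = c * q x)
    (hq_cont : Continuous q) (f : V → ℝ) :
    ((∀ (c : ℝ), 0 ≤ c → ∀ x : V, f (c • x) = c * f x) ∧
        ∀ x y : V, f x - f y ≤ q (x - y)) ↔
      ∀ x : V,
        (∀ y : V, ∃ r : ℝ,
          IsGreatest {s : ℝ | ∃ p : V →L[ℝ] ℝ,
            ((∀ z : V, p z ≤ q z) ∧ p y ≤ f y) ∧ s = p x} r) ∧
        IsLeast {r : ℝ | ∃ y : V,
          IsGreatest {s : ℝ | ∃ p : V →L[ℝ] ℝ,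
            ((∀ z : V, p z ≤ q z) ∧ p y ≤ f y) ∧ s = p x} r} (f x) :=
  stmt11_general q hq_convex hq_hom hq_cont f
end

section
/- Let Δₙ denote the standard simplex of ℝⁿ. A function f : ℝⁿ → ℝ is monotone, additively homogeneous and positively homogeneous if, and only if, for every x ∈ ℝⁿ, f(x) = min_{y ∈ ℝⁿ} max_{p ∈ Δₙ, ⟨p,y⟩ ≤ f(y)} ⟨p,x⟩, where ⟨·,·⟩ is the usual scalar product on ℝⁿ, both the outer minimum over y and the inner maximum being attained. Moreover the value does not change if the minimum is restricted to those y ∈ ℝⁿ with f(y) = 0. -/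
/-!
For fixed `y`, the map `x ↦ max {⟨p, x⟩ | p ∈ Δ, ⟨p, y⟩ ≤ f y}` is monotone, additively and
positively homogeneous, and these properties pass to a pointwise minimum.

Conversely, if `f` has them and `x ≤ l • y + c • 𝟙` with `l ≥ 0`, then
`f x ≤ l * f y + c`. By LP duality the least such bound is the inner maximum, so `f x` is at most
the inner maximum for every `y`, with equality at `y = x - f x • 𝟙`, where `f y = 0`.
-/

open Matrix

namespace MinMaxRepresentation

variable {ι : Type*}

lemma nonempty_of_apply_add_smul_one {f : (ι → ℝ) → ℝ}
    (hadd : ∀ x (c : ℝ), f (x + c • 1) = f x + c) : Nonempty ι := by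
  refine (isEmpty_or_nonempty ι).resolve_left fun _ => ?_
  have := hadd 0 1
  rw [Subsingleton.elim ((0 : ι → ℝ) + (1 : ℝ) • 1) 0] at this
  linarith

variable [Fintype ι]

lemma dotProduct_add_smul_one {p : ι → ℝ} (hp : p ∈ stdSimplex ℝ ι) (x : ι → ℝ) (d : ℝ) :
    p ⬝ᵥ (x + d • 1) = p ⬝ᵥ x + d := by
  rw [dotProduct_add, dotProduct_smul, dotProduct_one, hp.2, smul_eq_mul, mul_one]

def cutValues (y : ι → ℝ) (c : ℝ) (x : ι → ℝ) : Set ℝ :=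
  {s | ∃ p ∈ stdSimplex ℝ ι, p ⬝ᵥ y ≤ c ∧ s = p ⬝ᵥ x}

def minMaxValues (f : (ι → ℝ) → ℝ) (x : ι → ℝ) : Set ℝ :=
  {r | ∃ y, IsGreatest (cutValues y (f y) x) r}

section CutValues

variable {x y : ι → ℝ} {c r : ℝ}

lemma mem_cutValues_of_le [DecidableEq ι] {i : ι} (hi : y i ≤ c) : x i ∈ cutValues y c x :=
  ⟨Pi.single i 1, single_mem_stdSimplex ℝ i, by rwa [single_dotProduct, one_mul],
    by rw [single_dotProduct, one_mul]⟩

lemma mem_cutValues_of_lt_of_lt [DecidableEq ι] {i j : ι} (hi : y i < c) (hj : c < y j) :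
    ((y j - c) * x i + (c - y i) * x j) / (y j - y i) ∈ cutValues y c x := by
  have hij : 0 < y j - y i := by linarith
  set p : ι → ℝ := ((y j - c) / (y j - y i)) • Pi.single i 1 +
    ((c - y i) / (y j - y i)) • Pi.single j 1
  have hp : p ∈ stdSimplex ℝ ι :=
    convex_stdSimplex ℝ ι (single_mem_stdSimplex ℝ i) (single_mem_stdSimplex ℝ j)
      (div_nonneg (by linarith) hij.le) (div_nonneg (by linarith) hij.le)
      (by field_simp; ring)
  have hdot : ∀ z : ι → ℝ, p ⬝ᵥ z = ((y j - c) * z i + (c - y i) * z j) / (y j - y i) := by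
    intro z
    simp only [p, add_dotProduct, smul_dotProduct, single_dotProduct, smul_eq_mul]
    field_simp
  refine ⟨p, hp, ?_, (hdot x).symm⟩
  rw [hdot, div_le_iff₀ hij]
  exact le_of_eq (by ring)

lemma exists_isGreatest_cutValues (hy : ∃ i, y i ≤ c) (x : ι → ℝ) :
    ∃ r, IsGreatest (cutValues y c x) r := by
  classical
  obtain ⟨i, hi⟩ := hy
  have hK : IsCompact {p ∈ stdSimplex ℝ ι | p ⬝ᵥ y ≤ c} :=
    (isCompact_stdSimplex ℝ ι).inter_right
      (isClosed_le (continuous_id.dotProduct continuous_const) continuous_const)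
  have himage : cutValues y c x = (· ⬝ᵥ x) '' {p ∈ stdSimplex ℝ ι | p ⬝ᵥ y ≤ c} := by
    ext s
    simp only [cutValues, Set.mem_image, Set.mem_ofPred_eq, and_assoc, eq_comm]
  rw [himage]
  exact (hK.image (continuous_id.dotProduct continuous_const)).exists_isGreatest
    (himage ▸ ⟨x i, mem_cutValues_of_le hi⟩)

/-- LP duality for `max {⟨p, x⟩ | p ∈ Δ, ⟨p, y⟩ ≤ c}`: an upper bound `r` comes with a multiplier
`l ≥ 0` of the constraint. Take for `l` the largest ratio `(x j - r) / (y j - c)` with `c < y j`;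
the two-point distributions on `i, j` with `y i < c < y j` show that it does not exceed any
`(r - x i) / (c - y i)`. -/
lemma exists_multiplier_of_mem_upperBounds (hr : r ∈ upperBounds (cutValues y c x)) :
    ∃ l, 0 ≤ l ∧ ∀ i, x i - r ≤ l * (y i - c) := by
  classical
  have hsingle : ∀ i, y i ≤ c → x i ≤ r := fun i hi => hr (mem_cutValues_of_le hi)
  set g : ι → ℝ := fun j => max (if c < y j then (x j - r) / (y j - c) else 0) 0
  refine ⟨⨆ j, g j, Real.iSup_nonneg fun j => le_max_right _ _, fun i => ?_⟩
  rcases lt_trichotomy (y i) c with hi | hi | hi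
  · have hb : 0 ≤ (r - x i) / (c - y i) :=
      div_nonneg (by linarith [hsingle i hi.le]) (by linarith)
    have hle : ⨆ j, g j ≤ (r - x i) / (c - y i) := by
      refine Real.iSup_le (fun j => max_le ?_ hb) hb
      split_ifs with hj
      · rw [div_le_div_iff₀ (by linarith) (by linarith)]
        have := hr (mem_cutValues_of_lt_of_lt hi hj)
        rw [div_le_iff₀ (by linarith)] at this
        linarith
      · exact hb
    rw [le_div_iff₀ (by linarith)] at hle
    linarith
  · rw [hi, sub_self, mul_zero]
    linarith [hsingle i hi.le]
  · have hle : (x i - r) / (y i - c) ≤ ⨆ j, g j :=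
      (le_max_of_le_left (if_pos hi).ge).trans (le_ciSup (Set.finite_range g).bddAbove i)
    rw [div_le_iff₀ (by linarith)] at hle
    linarith

lemma isGreatest_cutValues_of_dotProduct_eq {x' : ι → ℝ} {φ : ℝ → ℝ} (hφ : Monotone φ)
    (hx : ∀ p ∈ stdSimplex ℝ ι, p ⬝ᵥ x' = φ (p ⬝ᵥ x)) (h : IsGreatest (cutValues y c x) r) :
    IsGreatest (cutValues y c x') (φ r) := by
  have himage : cutValues y c x' = φ '' cutValues y c x := by
    ext s
    constructor
    · rintro ⟨p, hp, hpy, rfl⟩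
      exact ⟨p ⬝ᵥ x, ⟨p, hp, hpy, rfl⟩, (hx p hp).symm⟩
    · rintro ⟨_, ⟨p, hp, hpy, rfl⟩, rfl⟩
      exact ⟨p, hp, hpy, (hx p hp).symm⟩
  exact himage ▸ hφ.map_isGreatest h

end CutValues

section Topical

variable {f : (ι → ℝ) → ℝ}

lemma exists_le_apply (hmono : Monotone f) (hadd : ∀ x (c : ℝ), f (x + c • 1) = f x + c)
    (h0 : f 0 = 0) (y : ι → ℝ) : ∃ i, y i ≤ f y := by
  have := nonempty_of_apply_add_smul_one hadd
  obtain ⟨i, hi⟩ := Finite.exists_min y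
  refine ⟨i, ?_⟩
  calc y i = f (0 + y i • 1) := by rw [hadd, h0, zero_add]
    _ ≤ f y := hmono fun j => by simpa using hi j

lemma apply_le_of_mem_upperBounds_cutValues (hmono : Monotone f)
    (hadd : ∀ x (c : ℝ), f (x + c • 1) = f x + c)
    (hpos : ∀ c : ℝ, 0 ≤ c → ∀ x, f (c • x) = c * f x) {x y : ι → ℝ} {r : ℝ}
    (hr : r ∈ upperBounds (cutValues y (f y) x)) : f x ≤ r := by
  obtain ⟨l, hl, hlr⟩ := exists_multiplier_of_mem_upperBounds hr
  calc f x ≤ f (l • y + (r - l * f y) • 1) := hmono fun i => by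
        simp only [Pi.add_apply, Pi.smul_apply, Pi.one_apply, smul_eq_mul, mul_one]
        linarith [hlr i]
    _ = r := by rw [hadd, hpos l hl]; ring

lemma exists_apply_eq_zero_isGreatest_cutValues (hmono : Monotone f)
    (hadd : ∀ x (c : ℝ), f (x + c • 1) = f x + c)
    (hpos : ∀ c : ℝ, 0 ≤ c → ∀ x, f (c • x) = c * f x) (x : ι → ℝ) :
    ∃ y, f y = 0 ∧ IsGreatest (cutValues y (f y) x) (f x) := by
  have hf0 : f 0 = 0 := by simpa using hpos 0 le_rfl 0
  have hy : f (x + (-f x) • 1) = 0 := by rw [hadd]; ring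
  refine ⟨x + (-f x) • 1, hy, ?_⟩
  have hupper : f x ∈ upperBounds (cutValues (x + (-f x) • 1) 0 x) := by
    rintro _ ⟨p, hp, hpy, rfl⟩
    rw [dotProduct_add_smul_one hp] at hpy
    linarith
  obtain ⟨r, hr⟩ := exists_isGreatest_cutValues (exists_le_apply hmono hadd hf0 _) x
  obtain rfl : r = f x :=
    le_antisymm (hupper (hy ▸ hr.1)) (apply_le_of_mem_upperBounds_cutValues hmono hadd hpos hr.2)
  exact hr

end Topical

section Representation

variable {f : (ι → ℝ) → ℝ}

lemma apply_le_of_isLeast_minMaxValues {x x' : ι → ℝ} {φ : ℝ → ℝ} (hφ : Monotone φ)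
    (hx : ∀ p ∈ stdSimplex ℝ ι, p ⬝ᵥ x' = φ (p ⬝ᵥ x)) (h : IsLeast (minMaxValues f x) (f x))
    (h' : IsLeast (minMaxValues f x') (f x')) : f x' ≤ φ (f x) := by
  obtain ⟨y, hy⟩ := h.1
  exact h'.2 ⟨y, isGreatest_cutValues_of_dotProduct_eq hφ hx hy⟩

lemma monotone_of_isLeast_minMaxValues (hE : ∀ x y, ∃ r, IsGreatest (cutValues y (f y) x) r)
    (hL : ∀ x, IsLeast (minMaxValues f x) (f x)) : Monotone f := by
  intro x x' hxx'
  obtain ⟨y, hy⟩ := (hL x').1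
  obtain ⟨r, hr⟩ := hE x y
  obtain ⟨p, hp, hpy, hpx⟩ := hr.1
  calc f x ≤ r := (hL x).2 ⟨y, hr⟩
    _ = p ⬝ᵥ x := hpx
    _ ≤ p ⬝ᵥ x' := dotProduct_le_dotProduct_of_nonneg_left hxx' hp.1
    _ ≤ f x' := hy.2 ⟨p, hp, hpy, rfl⟩

lemma apply_add_smul_one_of_isLeast_minMaxValues (hL : ∀ x, IsLeast (minMaxValues f x) (f x))
    (x : ι → ℝ) (c : ℝ) : f (x + c • 1) = f x + c := by
  refine le_antisymm ?_ ?_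
  · exact apply_le_of_isLeast_minMaxValues (φ := (· + c)) (fun _ _ h => by simpa using h)
      (fun p hp => dotProduct_add_smul_one hp x c) (hL _) (hL _)
  · have := apply_le_of_isLeast_minMaxValues (x := x + c • 1) (φ := (· - c))
      (fun _ _ h => by simpa using h)
      (fun p hp => by rw [dotProduct_add_smul_one hp]; ring) (hL _) (hL x)
    linarith

lemma apply_smul_of_isLeast_minMaxValues (hL : ∀ x, IsLeast (minMaxValues f x) (f x))
    (c : ℝ) (hc : 0 ≤ c) (x : ι → ℝ) : f (c • x) = c * f x := by
  rcases hc.eq_or_lt with rfl | hc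
  · obtain ⟨y, ⟨p, -, -, hp⟩, -⟩ := (hL 0).1
    rw [zero_smul, zero_mul, hp, dotProduct_zero]
  refine le_antisymm ?_ ?_
  · exact apply_le_of_isLeast_minMaxValues (monotone_mul_left_of_nonneg hc.le)
      (fun p _ => dotProduct_smul c p x) (hL _) (hL _)
  · have := apply_le_of_isLeast_minMaxValues (x := c • x)
      (monotone_mul_left_of_nonneg (inv_nonneg.mpr hc.le))
      (fun p _ => by rw [dotProduct_smul, smul_eq_mul, inv_mul_cancel_left₀ hc.ne']) (hL _) (hL x)
    rwa [le_inv_mul_iff₀ hc] at this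

end Representation

end MinMaxRepresentation

open MinMaxRepresentation in
theorem stmt13_general {n : ℕ} (f : (Fin n → ℝ) → ℝ) :
    (Monotone f ∧
        (∀ (x : Fin n → ℝ) (c : ℝ), f (x + c • (1 : Fin n → ℝ)) = f x + c) ∧
        (∀ (c : ℝ), 0 ≤ c → ∀ x : Fin n → ℝ, f (c • x) = c * f x)) ↔
      ∀ x : Fin n → ℝ,
        (∀ y : Fin n → ℝ, ∃ r : ℝ,
          IsGreatest {s : ℝ | ∃ p : Fin n → ℝ,
            ((∀ i, 0 ≤ p i) ∧ ∑ i, p i = 1) ∧ (∑ j, p j * y j) ≤ f y ∧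
              s = ∑ j, p j * x j} r) ∧
        IsLeast {r : ℝ | ∃ y : Fin n → ℝ,
          IsGreatest {s : ℝ | ∃ p : Fin n → ℝ,
            ((∀ i, 0 ≤ p i) ∧ ∑ i, p i = 1) ∧ (∑ j, p j * y j) ≤ f y ∧
              s = ∑ j, p j * x j} r} (f x) ∧
        IsLeast {r : ℝ | ∃ y : Fin n → ℝ, f y = 0 ∧
          IsGreatest {s : ℝ | ∃ p : Fin n → ℝ,
            ((∀ i, 0 ≤ p i) ∧ ∑ i, p i = 1) ∧ (∑ j, p j * y j) ≤ f y ∧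
              s = ∑ j, p j * x j} r} (f x) := by
  change _ ↔ ∀ x, (∀ y, ∃ r, IsGreatest (cutValues y (f y) x) r) ∧
    IsLeast (minMaxValues f x) (f x) ∧
    IsLeast {r | ∃ y, f y = 0 ∧ IsGreatest (cutValues y (f y) x) r} (f x)
  constructor
  · rintro ⟨hmono, hadd, hpos⟩ x
    have hf0 : f 0 = 0 := by simpa using hpos 0 le_rfl 0
    have hlower : f x ∈ lowerBounds (minMaxValues f x) := fun r ⟨_, hr⟩ =>
      apply_le_of_mem_upperBounds_cutValues hmono hadd hpos hr.2
    obtain ⟨y, hy, hxy⟩ := exists_apply_eq_zero_isGreatest_cutValues hmono hadd hpos x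
    exact ⟨fun y => exists_isGreatest_cutValues (exists_le_apply hmono hadd hf0 y) x,
      ⟨⟨y, hxy⟩, hlower⟩, ⟨⟨y, hy, hxy⟩, fun r ⟨y, _, hr⟩ => hlower ⟨y, hr⟩⟩⟩
  · intro h
    exact ⟨monotone_of_isLeast_minMaxValues (fun x => (h x).1) (fun x => (h x).2.1),
      apply_add_smul_one_of_isLeast_minMaxValues fun x => (h x).2.1,
      apply_smul_of_isLeast_minMaxValues fun x => (h x).2.1⟩

/-- With `Δₙ` the standard simplex of `ℝⁿ`, a function `f : ℝⁿ → ℝ` is monotone,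
additively homogeneous and positively homogeneous if and only if, for every `x`,
`f x = min_{y} max_{p ∈ Δₙ, ⟨p,y⟩ ≤ f y} ⟨p, x⟩`, both the outer minimum over `y` and the
inner maximum being attained. Moreover the value does not change if the minimum is restricted
to those `y` with `f y = 0`. -/
theorem stmt13 {n : ℕ} (hn : 0 < n) (f : (Fin n → ℝ) → ℝ) :
    (Monotone f ∧
        (∀ (x : Fin n → ℝ) (c : ℝ), f (x + c • (1 : Fin n → ℝ)) = f x + c) ∧
        (∀ (c : ℝ), 0 ≤ c → ∀ x : Fin n → ℝ, f (c • x) = c * f x)) ↔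
      ∀ x : Fin n → ℝ,
        (∀ y : Fin n → ℝ, ∃ r : ℝ,
          IsGreatest {s : ℝ | ∃ p : Fin n → ℝ,
            ((∀ i, 0 ≤ p i) ∧ ∑ i, p i = 1) ∧ (∑ j, p j * y j) ≤ f y ∧
              s = ∑ j, p j * x j} r) ∧
        IsLeast {r : ℝ | ∃ y : Fin n → ℝ,
          IsGreatest {s : ℝ | ∃ p : Fin n → ℝ,
            ((∀ i, 0 ≤ p i) ∧ ∑ i, p i = 1) ∧ (∑ j, p j * y j) ≤ f y ∧
              s = ∑ j, p j * x j} r} (f x) ∧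
        IsLeast {r : ℝ | ∃ y : Fin n → ℝ, f y = 0 ∧
          IsGreatest {s : ℝ | ∃ p : Fin n → ℝ,
            ((∀ i, 0 ≤ p i) ∧ ∑ i, p i = 1) ∧ (∑ j, p j * y j) ≤ f y ∧
              s = ∑ j, p j * x j} r} (f x) :=
  stmt13_general f
end

section
/- Let (Ω, 𝓕, ℙ) be a probability space and let L∞(ℙ) be the Banach lattice of (equivalence classes of) essentially bounded real-valued random variables with the essential sup norm, with unit e the a.s. constant function 1. Let Δ(ℙ) be the set of continuous linear functionals p on L∞(ℙ) such that p(e) = 1 and p(X) ≥ 0 whenever X ≥ 0 a.s. Let μ : L∞(ℙ) → ℝ be a risk measure, i.e., μ(X) ≥ μ(Y) whenever X ≤ Y a.s., and μ(X + λe) = μ(X) − λ for all λ ∈ ℝ. Then for every X ∈ L∞(ℙ), μ(X) = min_{Y ∈ L∞(ℙ), μ(Y) = 0} max_{p ∈ Δ(ℙ)} p(Y − X), both the minimum (over Y with μ(Y)=0) and the maximum being attained. -/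
/-!
Every probability density `g ∈ L¹(ℙ)` gives an element `W ↦ ∫ W g dℙ` of `Δ(ℙ)`, and testing
against the normalized indicators of sets of positive measure shows that `Z ≤ r` a.s. as soon as
`p Z ≤ r` for all these `p`. Hence if `ρ Y = 0` and `p (Y - X) ≤ r` on `Δ(ℙ)`, then
`Y ≤ X + r e`, so `0 = ρ Y ≥ ρ X - r`. Conversely `Y = X + (ρ X) e` has `ρ Y = 0` and
`p (Y - X) = ρ X` for every `p ∈ Δ(ℙ)`.
-/

open MeasureTheory

namespace MeasureTheory.Lp

variable {Ω : Type*} [MeasurableSpace Ω] {μ : Measure Ω}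

theorem indicatorConstLp_nonneg {p : ENNReal} {s : Set Ω} {hs : MeasurableSet s} {hμs : μ s ≠ ⊤}
    {c : ℝ} (hc : 0 ≤ c) : 0 ≤ indicatorConstLp p hs hμs c := by
  rw [← coeFn_nonneg]
  filter_upwards [indicatorConstLp_coeFn (p := p) (hs := hs) (hμs := hμs) (c := c)] with ω hω
  rw [hω]
  exact Set.indicator_nonneg (fun _ _ => hc) ω

theorem le_add_smul_of_ae_sub_le {p : ENNReal} {e : Lp ℝ p μ} (he : e =ᵐ[μ] 1) {X Y : Lp ℝ p μ}
    {r : ℝ} (h : ∀ᵐ ω ∂μ, (Y - X) ω ≤ r) : Y ≤ X + r • e := by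
  rw [← coeFn_le]
  filter_upwards [h, coeFn_sub Y X, coeFn_add X (r • e), coeFn_smul r e, he]
    with ω hω hsub hadd hsmul heω
  simp only [hsub, hadd, hsmul, Pi.sub_apply, Pi.add_apply, Pi.smul_apply, heω] at hω ⊢
  simp only [Pi.one_apply, smul_eq_mul, mul_one]
  linarith

noncomputable def densityFunctional (g : Lp ℝ 1 μ) : Lp ℝ ⊤ μ →L[ℝ] ℝ :=
  (ContinuousLinearMap.lpPairing μ ⊤ 1 (ContinuousLinearMap.mul ℝ ℝ)).flip g

theorem densityFunctional_apply (g : Lp ℝ 1 μ) (W : Lp ℝ ⊤ μ) :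
    densityFunctional g W = ∫ ω, W ω * g ω ∂μ :=
  ContinuousLinearMap.lpPairing_eq_integral _ W g

theorem densityFunctional_nonneg {g : Lp ℝ 1 μ} (hg : 0 ≤ g) {W : Lp ℝ ⊤ μ} (hW : 0 ≤ W) :
    0 ≤ densityFunctional g W := by
  rw [densityFunctional_apply]
  refine integral_nonneg_of_ae ?_
  filter_upwards [(coeFn_nonneg W).2 hW, (coeFn_nonneg g).2 hg] with ω hWω hgω
  exact mul_nonneg hWω hgω

theorem densityFunctional_of_ae_eq_one (g : Lp ℝ 1 μ) {e : Lp ℝ ⊤ μ} (he : e =ᵐ[μ] 1) :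
    densityFunctional g e = ∫ ω, g ω ∂μ := by
  rw [densityFunctional_apply]
  refine integral_congr_ae ?_
  filter_upwards [he] with ω heω
  simp [heω]

theorem densityFunctional_indicatorConstLp {s : Set Ω} (hs : MeasurableSet s) (hμs : μ s ≠ ⊤)
    (c : ℝ) (W : Lp ℝ ⊤ μ) :
    densityFunctional (indicatorConstLp 1 hs hμs c) W = c * ∫ ω in s, W ω ∂μ := by
  rw [densityFunctional_apply, ← integral_const_mul, ← integral_indicator hs]
  refine integral_congr_ae ?_
  filter_upwards [indicatorConstLp_coeFn (p := 1) (hs := hs) (hμs := hμs) (c := c)] with ω hω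
  by_cases hωs : ω ∈ s <;> simp [hω, hωs, mul_comm]

theorem ae_le_of_forall_densityFunctional_le [IsFiniteMeasure μ] {Z : Lp ℝ ⊤ μ} {r : ℝ}
    (h : ∀ g : Lp ℝ 1 μ, 0 ≤ g → ∫ ω, g ω ∂μ = 1 → densityFunctional g Z ≤ r) :
    ∀ᵐ ω ∂μ, Z ω ≤ r := by
  refine ae_le_of_forall_setIntegral_le ((Lp.memLp Z).integrable le_top) (integrable_const r)
    fun s hs _ => ?_
  rcases eq_or_ne (μ s) 0 with hμs0 | hμs0
  · simp [setIntegral_measure_zero _ hμs0]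
  have hreal : 0 < μ.real s := ENNReal.toReal_pos hμs0 (measure_ne_top μ s)
  set g := indicatorConstLp 1 hs (measure_ne_top μ s) (μ.real s)⁻¹
  have hg1 : ∫ ω, g ω ∂μ = 1 := by
    rw [integral_indicatorConstLp, smul_eq_mul, mul_inv_cancel₀ hreal.ne']
  have := h g (indicatorConstLp_nonneg (inv_nonneg.2 hreal.le)) hg1
  rw [densityFunctional_indicatorConstLp, inv_mul_le_iff₀ hreal] at this
  rw [setIntegral_const, smul_eq_mul]
  linarith

theorem exists_density [IsProbabilityMeasure μ] :
    ∃ g : Lp ℝ 1 μ, 0 ≤ g ∧ ∫ ω, g ω ∂μ = 1 :=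
  ⟨indicatorConstLp 1 MeasurableSet.univ (measure_ne_top μ _) 1,
    indicatorConstLp_nonneg zero_le_one, by simp⟩

end MeasureTheory.Lp

open Lp

/-- Let `(Ω, 𝓕, ℙ)` be a probability space, `L∞(ℙ)` the space of essentially
bounded random variables with unit `e` (the a.s. constant `1`), and `Δ(ℙ)` the set of
continuous linear functionals `p` with `p e = 1` and `p X ≥ 0` whenever `X ≥ 0` a.s.
If `ρ : L∞(ℙ) → ℝ` is a risk measure, then for every `X`,
`ρ X = min_{Y : ρ Y = 0} max_{p ∈ Δ(ℙ)} p (Y - X)`, both the minimum and maximum being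
attained. -/
theorem stmt14 {Ω : Type*} [MeasurableSpace Ω] (ℙ : Measure Ω) [IsProbabilityMeasure ℙ]
    (e : Lp ℝ ⊤ ℙ) (he : e = MemLp.toLp (fun _ : Ω => (1 : ℝ)) (memLp_const 1))
    (ρ : Lp ℝ ⊤ ℙ → ℝ)
    (hmono : ∀ X Y : Lp ℝ ⊤ ℙ, X ≤ Y → ρ Y ≤ ρ X)
    (hadd : ∀ (X : Lp ℝ ⊤ ℙ) (c : ℝ), ρ (X + c • e) = ρ X - c) :
    ∀ X : Lp ℝ ⊤ ℙ,
      IsLeast {r : ℝ | ∃ Y : Lp ℝ ⊤ ℙ, ρ Y = 0 ∧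
        IsGreatest {s : ℝ | ∃ p : Lp ℝ ⊤ ℙ →L[ℝ] ℝ,
          (p e = 1 ∧ ∀ Z : Lp ℝ ⊤ ℙ, 0 ≤ Z → 0 ≤ p Z) ∧ s = p (Y - X)} r} (ρ X) := by
  intro X
  have he1 : (e : Ω → ℝ) =ᵐ[ℙ] 1 := he ▸ MemLp.coeFn_toLp _
  have hΔ : ∀ g : Lp ℝ 1 ℙ, 0 ≤ g → ∫ ω, g ω ∂ℙ = 1 →
      densityFunctional g e = 1 ∧ ∀ Z, 0 ≤ Z → 0 ≤ densityFunctional g Z :=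
    fun g hg hg1 ↦ ⟨(densityFunctional_of_ae_eq_one g he1).trans hg1,
      fun _ ↦ densityFunctional_nonneg hg⟩
  constructor
  · have hYX : X + ρ X • e - X = ρ X • e := add_sub_cancel_left _ _
    refine ⟨X + ρ X • e, by simpa using hadd X (ρ X), ?_, ?_⟩
    · obtain ⟨g, hg, hg1⟩ := exists_density (μ := ℙ)
      refine ⟨densityFunctional g, hΔ g hg hg1, ?_⟩
      simp [hYX, (hΔ g hg hg1).1]
    · rintro s ⟨p, ⟨hpe, -⟩, rfl⟩
      simp [hYX, hpe]
  · rintro r ⟨Y, hY0, -, hr⟩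
    have hYr : Y ≤ X + r • e := le_add_smul_of_ae_sub_le he1 <|
      ae_le_of_forall_densityFunctional_le fun g hg hg1 ↦ hr ⟨_, hΔ g hg hg1, rfl⟩
    have hρ := hmono _ _ hYr
    rw [hY0, hadd] at hρ
    linarith
end

section
/- Let F : ℝⁿ → ℝⁿ be a payment-free Shapley operator, i.e., F is monotone, additively homogeneous and positively homogeneous. Then for each i ∈ {1,…,n}, setting A_i := { a ∈ ℝⁿ | F_i(a) = 0 }, there exists for every a ∈ A_i a finite set B_{i,a} of stochastic vectors of ℝⁿ, each having at most two positive coordinates, such that for all x ∈ ℝⁿ, F_i(x) = min_{a ∈ A_i} max_{b ∈ B_{i,a}} ⟨b, x⟩, the minimum over A_i being attained. -/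
/-!
For `a` with `F_i(a) = 0`, take for `B_a` the vertices of the polytope `{b ∈ Δ | ⟨b, a⟩ ≤ 0}`.
For `a = x - F_i(x) 𝟙` we have `F_i(a) = 0`, so `min a ≤ 0 ≤ max a`; hence `⟨b, a⟩ ≤ 0` on `B_a`
with equality at some vertex, i.e. `max_{b ∈ B_a} ⟨b, x⟩ = F_i(x)`. Conversely, if
`⟨b, x⟩ ≤ r` on `B_a`, then `x ≤ α a + r 𝟙` for some `α ≥ 0`, and monotonicity and homogeneity
give `F_i(x) ≤ α F_i(a) + r = r`.
-/

open Finset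

lemma exists_nonneg_between_of_forall_le {ι : Type*} (s t : Finset ι) (u v : ι → ℝ)
    (huv : ∀ k ∈ s, ∀ m ∈ t, u k ≤ v m) (hv : ∀ m ∈ t, 0 ≤ v m) :
    ∃ α : ℝ, 0 ≤ α ∧ (∀ k ∈ s, u k ≤ α) ∧ ∀ m ∈ t, α ≤ v m := by
  rcases s.eq_empty_or_nonempty with rfl | hs
  · exact ⟨0, le_rfl, by simp, hv⟩
  obtain ⟨k₀, hk₀, hmax⟩ := s.exists_max_image u hs
  exact ⟨max 0 (u k₀), le_max_left _ _, fun k hk => (hmax k hk).trans (le_max_right _ _),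
    fun m hm => max_le (hv m hm) (huv k₀ hk₀ m hm)⟩

section Vertices

variable {ι : Type*} [DecidableEq ι]

noncomputable def edgeCrossing (a : ι → ℝ) (j k : ι) : ι → ℝ :=
  (a k / (a k - a j)) • Pi.single j 1 + (-a j / (a k - a j)) • Pi.single k 1

variable {a : ι → ℝ} {j k : ι}

lemma edgeCrossing_nonneg (hj : a j < 0) (hk : 0 < a k) : 0 ≤ edgeCrossing a j k := by
  have hd : 0 < a k - a j := by linarith
  unfold edgeCrossing
  exact add_nonneg (smul_nonneg (div_nonneg hk.le hd.le) (Pi.single_nonneg.mpr zero_le_one))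
    (smul_nonneg (div_nonneg (by linarith) hd.le) (Pi.single_nonneg.mpr zero_le_one))

lemma edgeCrossing_apply_of_ne {m : ι} (hj : m ≠ j) (hk : m ≠ k) : edgeCrossing a j k m = 0 := by
  simp [edgeCrossing, hj, hk]

variable [Fintype ι]

/-- The vertices of the polytope `{b ∈ Δ | ⟨b, a⟩ ≤ 0}` cut from the standard simplex `Δ`: the
unit vectors `e_j` with `a_j ≤ 0`, and the crossings of edges `[e_j, e_k]` with `a_j < 0 < a_k`. -/
noncomputable def cutSimplexVertices (a : ι → ℝ) : Finset (ι → ℝ) :=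
  ((univ.filter fun j => a j ≤ 0).image fun j => Pi.single j 1) ∪
    ((univ ×ˢ univ).filter fun p : ι × ι => a p.1 < 0 ∧ 0 < a p.2).image
      fun p => edgeCrossing a p.1 p.2

lemma edgeCrossing_dotProduct (x : ι → ℝ) :
    edgeCrossing a j k ⬝ᵥ x = (a k * x j - a j * x k) / (a k - a j) := by
  simp only [edgeCrossing, add_dotProduct, smul_dotProduct, single_one_dotProduct, smul_eq_mul]
  ring

lemma edgeCrossing_dotProduct_self : edgeCrossing a j k ⬝ᵥ a = 0 := by
  rw [edgeCrossing_dotProduct]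
  ring

lemma sum_edgeCrossing (h : a j ≠ a k) : ∑ m, edgeCrossing a j k m = 1 := by
  rw [← dotProduct_one, edgeCrossing_dotProduct]
  simp only [Pi.one_apply, mul_one]
  exact div_self (sub_ne_zero.mpr h.symm)

lemma card_filter_pos_le_two (b : ι → ℝ) (j k : ι) (h : ∀ m, m ≠ j → m ≠ k → b m = 0) :
    (univ.filter fun m => 0 < b m).card ≤ 2 := by
  refine (card_le_card (t := {j, k}) fun m hm => ?_).trans card_le_two
  by_contra hjk
  simp only [mem_insert, mem_singleton, not_or] at hjk
  simp [h m hjk.1 hjk.2] at hm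

lemma stochastic_of_mem_cutSimplexVertices {b : ι → ℝ} (hb : b ∈ cutSimplexVertices a) :
    (∀ j, 0 ≤ b j) ∧ (∑ j, b j = 1) ∧ (univ.filter fun j => 0 < b j).card ≤ 2 := by
  simp only [cutSimplexVertices, mem_union, mem_image, mem_filter, mem_product, mem_univ,
    true_and] at hb
  rcases hb with ⟨j, -, rfl⟩ | ⟨⟨j, k⟩, ⟨hj, hk⟩, rfl⟩
  · refine ⟨fun m => by by_cases hm : m = j <;> simp [hm], by simp, ?_⟩
    exact card_filter_pos_le_two _ j j fun m hm _ => Pi.single_eq_of_ne hm _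
  · exact ⟨edgeCrossing_nonneg hj hk, sum_edgeCrossing (by linarith),
      card_filter_pos_le_two _ j k fun m => edgeCrossing_apply_of_ne⟩

lemma dotProduct_self_nonpos_of_mem_cutSimplexVertices {b : ι → ℝ}
    (hb : b ∈ cutSimplexVertices a) : b ⬝ᵥ a ≤ 0 := by
  simp only [cutSimplexVertices, mem_union, mem_image, mem_filter, mem_product, mem_univ,
    true_and] at hb
  rcases hb with ⟨j, hj, rfl⟩ | ⟨⟨j, k⟩, ⟨hj, hk⟩, rfl⟩
  · simpa using hj
  · exact edgeCrossing_dotProduct_self.le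

lemma exists_mem_cutSimplexVertices_dotProduct_self_eq_zero (hle : ∃ j, a j ≤ 0)
    (hge : ∃ k, 0 ≤ a k) : ∃ b ∈ cutSimplexVertices a, b ⬝ᵥ a = 0 := by
  by_cases hzero : ∃ j, a j = 0
  · obtain ⟨j, hj⟩ := hzero
    exact ⟨Pi.single j 1, mem_union_left _ (mem_image_of_mem _ (by simp [hj])), by simp [hj]⟩
  push Not at hzero
  obtain ⟨j, hj⟩ := hle
  obtain ⟨k, hk⟩ := hge
  have hj' : a j < 0 := hj.lt_of_ne (hzero j)
  have hk' : 0 < a k := hk.lt_of_ne (hzero k).symm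
  refine ⟨edgeCrossing a j k, mem_union_right _ (mem_image.mpr ⟨(j, k), ?_, rfl⟩),
    edgeCrossing_dotProduct_self⟩
  simp [hj', hk']

lemma isGreatest_dotProduct_cutSimplexVertices_sub {x : ι → ℝ} {c : ℝ}
    (hle : ∃ j, (x - c • 1) j ≤ 0) (hge : ∃ k, 0 ≤ (x - c • 1) k) :
    IsGreatest {s | ∃ b ∈ cutSimplexVertices (x - c • 1), s = b ⬝ᵥ x} c := by
  have key : ∀ b ∈ cutSimplexVertices (x - c • 1), b ⬝ᵥ x = b ⬝ᵥ (x - c • 1) + c := by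
    intro b hb
    rw [dotProduct_sub, dotProduct_smul, dotProduct_one,
      (stochastic_of_mem_cutSimplexVertices hb).2.1]
    simp
  obtain ⟨b, hb, hb0⟩ := exists_mem_cutSimplexVertices_dotProduct_self_eq_zero hle hge
  refine ⟨⟨b, hb, by rw [key b hb, hb0, zero_add]⟩, ?_⟩
  rintro s ⟨b, hb, rfl⟩
  linarith [key b hb, dotProduct_self_nonpos_of_mem_cutSimplexVertices hb]

lemma exists_le_smul_add_of_dotProduct_le {x : ι → ℝ} {r : ℝ}
    (hub : ∀ b ∈ cutSimplexVertices a, b ⬝ᵥ x ≤ r) : ∃ α : ℝ, 0 ≤ α ∧ x ≤ α • a + r • 1 := by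
  have hvertex : ∀ j, a j ≤ 0 → x j ≤ r := fun j hj => by
    simpa using hub _ (mem_union_left _ (mem_image_of_mem _ (by simp [hj])))
  have hedge : ∀ j k, a j < 0 → 0 < a k → a k * (x j - r) ≤ a j * (x k - r) := by
    intro j k hj hk
    have h := hub _ (mem_union_right _ (mem_image_of_mem _ (by simp [hj, hk] :
      (j, k) ∈ (univ ×ˢ univ).filter fun p : ι × ι => a p.1 < 0 ∧ 0 < a p.2)))
    rw [edgeCrossing_dotProduct, div_le_iff₀ (by linarith)] at h
    linarith
  -- `α` must lie between the slopes `(x_k - r) / a_k` with `a_k > 0` and those with `a_k < 0`.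
  obtain ⟨α, hα, hαpos, hαneg⟩ := exists_nonneg_between_of_forall_le
    (univ.filter fun k => 0 < a k) (univ.filter fun m => a m < 0)
    (fun k => (x k - r) / a k) (fun m => (x m - r) / a m)
    (fun k hk m hm => by
      simp only [mem_filter, mem_univ, true_and] at hk hm
      rw [div_le_iff₀ hk, div_mul_eq_mul_div, le_div_iff_of_neg hm]
      linarith [hedge m k hm hk])
    (fun m hm => div_nonneg_of_nonpos (sub_nonpos.mpr (hvertex m (mem_filter.mp hm).2.le))
      (mem_filter.mp hm).2.le)
  refine ⟨α, hα, fun m => ?_⟩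
  simp only [Pi.add_apply, Pi.smul_apply, smul_eq_mul, Pi.one_apply, mul_one]
  rcases lt_trichotomy (a m) 0 with hm | hm | hm
  · have h := hαneg m (by simp [hm])
    rw [le_div_iff_of_neg hm] at h
    linarith
  · rw [hm, mul_zero, zero_add]
    exact hvertex m hm.le
  · have h := hαpos m (by simp [hm])
    rw [div_le_iff₀ hm] at h
    linarith

end Vertices

section Shapley

variable {ι : Type*} {F : (ι → ℝ) → ι → ℝ}

lemma map_zero_of_posHomogeneous_s16 (hpos : ∀ c : ℝ, 0 ≤ c → ∀ x, F (c • x) = c • F x) :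
    F 0 = 0 := by
  simpa using hpos 0 le_rfl 0

lemma apply_sub_smul_one_self
    (hadd : ∀ (x : ι → ℝ) (c : ℝ), F (x + c • (1 : ι → ℝ)) = F x + c • 1) (x : ι → ℝ) (i : ι) :
    F (x - F x i • 1) i = 0 := by
  have h := congrFun (hadd (x - F x i • 1) (F x i)) i
  simp only [sub_add_cancel, Pi.add_apply, Pi.smul_apply, Pi.one_apply, smul_eq_mul,
    mul_one] at h
  linarith

variable [Finite ι] [Nonempty ι]

lemma exists_le_apply (hmono : Monotone F)
    (hadd : ∀ (x : ι → ℝ) (c : ℝ), F (x + c • (1 : ι → ℝ)) = F x + c • 1) (h0 : F 0 = 0)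
    (a : ι → ℝ) (i : ι) : ∃ j, a j ≤ F a i := by
  obtain ⟨j, hj⟩ := Finite.exists_min a
  have hconst := congrFun (hadd 0 (a j)) i
  have hle := hmono (show 0 + a j • 1 ≤ a from fun m => by simpa using hj m) i
  simp only [h0, zero_add, Pi.smul_apply, Pi.one_apply, smul_eq_mul, mul_one] at hconst hle
  exact ⟨j, hconst ▸ hle⟩

lemma exists_apply_le (hmono : Monotone F)
    (hadd : ∀ (x : ι → ℝ) (c : ℝ), F (x + c • (1 : ι → ℝ)) = F x + c • 1) (h0 : F 0 = 0)
    (a : ι → ℝ) (i : ι) : ∃ k, F a i ≤ a k := by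
  obtain ⟨k, hk⟩ := Finite.exists_max a
  have hconst := congrFun (hadd 0 (a k)) i
  have hle := hmono (show a ≤ 0 + a k • 1 from fun m => by simpa using hk m) i
  simp only [h0, zero_add, Pi.smul_apply, Pi.one_apply, smul_eq_mul, mul_one] at hconst hle
  exact ⟨k, hconst ▸ hle⟩

end Shapley

theorem stmt16_general {n : ℕ} (F : (Fin n → ℝ) → Fin n → ℝ)
    (hmono : Monotone F)
    (hadd : ∀ (x : Fin n → ℝ) (c : ℝ), F (x + c • (1 : Fin n → ℝ)) = F x + c • 1)
    (hpos : ∀ (c : ℝ), 0 ≤ c → ∀ x : Fin n → ℝ, F (c • x) = c • F x) :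
    ∀ i : Fin n, ∃ B : (Fin n → ℝ) → Finset (Fin n → ℝ),
      (∀ a : Fin n → ℝ, F a i = 0 → ∀ b ∈ B a,
        (∀ j, 0 ≤ b j) ∧ (∑ j, b j = 1) ∧
          (Finset.univ.filter fun j => 0 < b j).card ≤ 2) ∧
      ∀ x : Fin n → ℝ,
        IsLeast {r : ℝ | ∃ a : Fin n → ℝ, F a i = 0 ∧
          IsGreatest {s : ℝ | ∃ b ∈ B a, s = ∑ j, b j * x j} r} (F x i) := by
  intro i
  have : Nonempty (Fin n) := ⟨i⟩
  have h0 : F 0 = 0 := map_zero_of_posHomogeneous_s16 hpos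
  refine ⟨cutSimplexVertices, fun a _ b hb => stochastic_of_mem_cutSimplexVertices hb,
    fun x => ⟨?_, ?_⟩⟩
  · have ha := apply_sub_smul_one_self hadd x i
    obtain ⟨j, hj⟩ := exists_le_apply hmono hadd h0 (x - F x i • 1) i
    obtain ⟨k, hk⟩ := exists_apply_le hmono hadd h0 (x - F x i • 1) i
    rw [ha] at hj hk
    exact ⟨x - F x i • 1, ha, isGreatest_dotProduct_cutSimplexVertices_sub ⟨j, hj⟩ ⟨k, hk⟩⟩
  · rintro r ⟨a, ha, -, hub⟩
    obtain ⟨α, hα, hx⟩ := exists_le_smul_add_of_dotProduct_le fun b hb => hub ⟨b, hb, rfl⟩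
    calc F x i ≤ F (α • a + r • 1) i := hmono hx i
      _ = r := by simp [hadd, hpos α hα, ha]

/-- Let `F : ℝⁿ → ℝⁿ` be a payment-free Shapley operator (monotone, additively
homogeneous and positively homogeneous). Then for each coordinate `i`, with
`A_i = {a | F a i = 0}`, there is for every `a ∈ A_i` a finite set `B a` of stochastic
vectors, each with at most two positive coordinates, such that for all `x`,
`F x i = min_{a ∈ A_i} max_{b ∈ B a} ⟨b, x⟩`, the minimum over `A_i` being attained. -/
theorem stmt16 {n : ℕ} (hn : 0 < n) (F : (Fin n → ℝ) → Fin n → ℝ)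
    (hmono : Monotone F)
    (hadd : ∀ (x : Fin n → ℝ) (c : ℝ), F (x + c • (1 : Fin n → ℝ)) = F x + c • 1)
    (hpos : ∀ (c : ℝ), 0 ≤ c → ∀ x : Fin n → ℝ, F (c • x) = c • F x) :
    ∀ i : Fin n, ∃ B : (Fin n → ℝ) → Finset (Fin n → ℝ),
      (∀ a : Fin n → ℝ, F a i = 0 → ∀ b ∈ B a,
        (∀ j, 0 ≤ b j) ∧ (∑ j, b j = 1) ∧
          (Finset.univ.filter fun j => 0 < b j).card ≤ 2) ∧
      ∀ x : Fin n → ℝ,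
        IsLeast {r : ℝ | ∃ a : Fin n → ℝ, F a i = 0 ∧
          IsGreatest {s : ℝ | ∃ b ∈ B a, s = ∑ j, b j * x j} r} (F x i) :=
  stmt16_general F hmono hadd hpos
end

section
/- Let F : ℝⁿ → ℝⁿ be a payment-free Shapley operator, i.e., monotone, additively homogeneous and positively homogeneous, and let ε > 0. Then there exists a map G : ℝⁿ → ℝⁿ such that F_i(x) ≤ G_i(x) ≤ F_i(x) + ε‖x‖_∞ for all x ∈ ℝⁿ and all i ∈ {1,…,n}, and such that each coordinate of G has the form G_i(x) = min_{a ∈ A_i} max_{b ∈ B_{i,a}} ⟨P_i^{ab}, x⟩, where the A_i and B_{i,a} are finite sets and every P_i^{ab} is a stochastic vector of ℝⁿ with at most two positive coordinates. -/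
/-!
Fix a coordinate `i` and a vector `z` with `F_i(z) = 0`. For every `λ ≥ 0` and every `x`,
`x ≤ λ z + (max_j (x_j - λ z_j)) 𝟙`, so `F_i(x) ≤ x_j - λ z_j` for some `j`. If `⟨b, x⟩ < F_i(x)`
held for every vertex `b` of the polytope `{b ∈ Δ | ⟨b, z⟩ ≤ 0}` (the unit vectors `e_j` with
`z_j ≤ 0` and the points of the segments `[e_j, e_k]` orthogonal to `z` with `z_k < 0 < z_j`), a
suitable `λ` would contradict this. Hence `F_i(x) ≤ max_b ⟨b, x⟩`, while `⟨b, y⟩ ≤ F_i(y)` for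
`z = y - F_i(y) 𝟙`. Minimising over such `z`, for `y` in a finite net of the unit ball, gives `G`;
the upper bound follows since `F` is `1`-Lipschitz for the sup-norm and positively homogeneous.
-/

open Finset Filter Topology Metric

namespace Shapley

theorem exists_isGreatest_image {β γ : Type*} [LinearOrder γ] {s : Finset β} (hs : s.Nonempty)
    (f : β → γ) : ∃ r, IsGreatest {t | ∃ b ∈ s, t = f b} r := by
  obtain ⟨b, hb, hmax⟩ := s.exists_max_image f hs
  exact ⟨f b, ⟨b, hb, rfl⟩, by rintro _ ⟨c, hc, rfl⟩; exact hmax c hc⟩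

theorem exists_isLeast_minimax {α β γ : Type*} [LinearOrder γ] {A : Finset α} (hA : A.Nonempty)
    {B : α → Finset β} (hB : ∀ a ∈ A, (B a).Nonempty) (f : β → γ) :
    ∃ g, IsLeast {r | ∃ a ∈ A, IsGreatest {s | ∃ b ∈ B a, s = f b} r} g := by
  set S := {r | ∃ a ∈ A, IsGreatest {s | ∃ b ∈ B a, s = f b} r}
  have hfin : S.Finite := by
    refine (A.finite_toSet.biUnion fun a _ => (B a).finite_toSet.image f).subset ?_
    rintro r ⟨a, ha, ⟨b, hb, rfl⟩, -⟩
    exact Set.mem_biUnion ha ⟨b, hb, rfl⟩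
  obtain ⟨a, ha⟩ := hA
  obtain ⟨r, hr⟩ := exists_isGreatest_image (hB a ha) f
  obtain ⟨g, hg, hmin⟩ := Set.exists_min_image S id hfin ⟨r, a, ha, hr⟩
  exact ⟨g, hg, hmin⟩

theorem exists_finset_forall_norm_sub_lt {E : Type*} [NormedAddCommGroup E] [ProperSpace E]
    {δ : ℝ} (hδ : 0 < δ) : ∃ N : Finset E, ∀ u : E, ‖u‖ ≤ 1 → ∃ y ∈ N, ‖u - y‖ < δ := by
  obtain ⟨t, -, ht, hcover⟩ := (isCompact_closedBall (0 : E) 1).finite_cover_balls hδ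
  refine ⟨ht.toFinset, fun u hu => ?_⟩
  obtain ⟨y, hy, huy⟩ := Set.mem_iUnion₂.1 (hcover (mem_closedBall_zero_iff.2 hu))
  exact ⟨y, ht.mem_toFinset.2 hy, by rwa [mem_ball, dist_eq_norm] at huy⟩

theorem exists_norm_le_one_norm_smul_eq {E : Type*} [NormedAddCommGroup E] [NormedSpace ℝ E]
    (x : E) : ∃ u : E, ‖u‖ ≤ 1 ∧ ‖x‖ • u = x := by
  rcases eq_or_ne x 0 with rfl | hx
  · exact ⟨0, by simp⟩
  · have hx' : ‖x‖ ≠ 0 := norm_ne_zero_iff.2 hx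
    exact ⟨‖x‖⁻¹ • x, by rw [norm_smul, norm_inv, norm_norm, inv_mul_cancel₀ hx'],
      smul_inv_smul₀ hx' x⟩

variable {ι : Type*}

theorem apply_sub_smul_one_apply_self {F : (ι → ℝ) → ι → ℝ}
    (hadd : ∀ (x : ι → ℝ) (c : ℝ), F (x + c • (1 : ι → ℝ)) = F x + c • 1)
    (y : ι → ℝ) (i : ι) : F (y - F y i • 1) i = 0 := by
  simp [sub_eq_add_neg, ← neg_smul, hadd]

variable [Fintype ι]

theorem exists_nonneg_forall_lt_mul {z w : ι → ℝ} (hnonpos : ∀ j, z j ≤ 0 → w j < 0)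
    (hpair : ∀ j k, 0 < z j → z k < 0 → z j * w k < z k * w j) :
    ∃ c, 0 ≤ c ∧ ∀ j, w j < c * z j := by
  classical
  set L : Finset ℝ := insert 0 ((univ.filter fun j => 0 < z j).image fun j => w j / z j)
  set lo := L.max' (insert_nonempty _ _)
  have hlo_nonneg : 0 ≤ lo := L.le_max' 0 (mem_insert_self _ _)
  have hlo_pos : ∀ j, 0 < z j → w j / z j ≤ lo := fun j hj =>
    L.le_max' _ (mem_insert_of_mem (mem_image_of_mem _ (by simpa using hj)))
  have hlo_neg : ∀ k, z k < 0 → lo < w k / z k := by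
    intro k hk
    refine (L.max'_lt_iff _).2 fun y hy => ?_
    simp only [L, mem_insert, mem_image, mem_filter, mem_univ, true_and] at hy
    rcases hy with rfl | ⟨j, hj, rfl⟩
    · exact div_pos_of_neg_of_neg (hnonpos k hk.le) hk
    · rw [lt_div_iff_of_neg hk, div_mul_eq_mul_div, lt_div_iff₀ hj]
      linarith [hpair j k hj hk]
  -- any `c` slightly above `lo` works
  have hev : ∀ᶠ c in 𝓝[>] lo, ∀ j, w j < c * z j := by
    refine eventually_all.2 fun j => ?_
    rcases lt_trichotomy (z j) 0 with hj | hj | hj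
    · filter_upwards [eventually_nhdsWithin_of_eventually_nhds (eventually_lt_nhds (hlo_neg j hj))]
        with c hc
      exact (lt_div_iff_of_neg hj).1 hc
    · exact Eventually.of_forall fun c => by simpa [hj] using hnonpos j hj.le
    · filter_upwards [self_mem_nhdsWithin] with c hc
      exact (div_lt_iff₀ hj).1 ((hlo_pos j hj).trans_lt hc)
  obtain ⟨c, hlt, hc⟩ := (hev.and self_mem_nhdsWithin).exists
  exact ⟨c, hlo_nonneg.trans (le_of_lt hc), hlt⟩

theorem dotProduct_sub_smul_one {b : ι → ℝ} (hb : b ∈ stdSimplex ℝ ι) (x : ι → ℝ) (c : ℝ) :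
    b ⬝ᵥ (x - c • 1) = b ⬝ᵥ x - c := by
  rw [dotProduct_sub, dotProduct_smul, dotProduct_one, hb.2, smul_eq_mul, mul_one]

theorem dotProduct_le_norm {b : ι → ℝ} (hb : b ∈ stdSimplex ℝ ι) (v : ι → ℝ) : b ⬝ᵥ v ≤ ‖v‖ :=
  calc b ⬝ᵥ v = ∑ j, b j * v j := rfl
    _ ≤ ∑ j, b j * ‖v‖ := sum_le_sum fun j _ =>
        mul_le_mul_of_nonneg_left ((Real.le_norm_self _).trans (norm_le_pi_norm v j)) (hb.1 j)
    _ = ‖v‖ := by rw [← sum_mul, hb.2, one_mul]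

theorem card_filter_pos_le_two {b : ι → ℝ} {j k : ι} (hb : ∀ l, l ≠ j → l ≠ k → b l = 0) :
    (univ.filter fun l => 0 < b l).card ≤ 2 := by
  classical
  refine (card_le_card fun l hl => ?_).trans (card_le_two (a := j) (b := k))
  by_contra hjk
  simp only [mem_insert, mem_singleton, not_or] at hjk
  simp [hb l hjk.1 hjk.2] at hl

section Vertices

variable [DecidableEq ι]

/-- The point of the segment `[e_j, e_k]` orthogonal to `z`. -/
noncomputable def pairVec (z : ι → ℝ) (j k : ι) : ι → ℝ :=
  (-z k / (z j - z k)) • Pi.single j 1 + (z j / (z j - z k)) • Pi.single k 1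

/-- The vertices of the polytope `{b ∈ stdSimplex ℝ ι | b ⬝ᵥ z ≤ 0}`. -/
noncomputable def cutVertices (z : ι → ℝ) : Finset (ι → ℝ) := by
  classical
  exact (univ.filter fun j => z j ≤ 0).image (Pi.single · 1) ∪
    (univ.filter fun q : ι × ι => 0 < z q.1 ∧ z q.2 < 0).image fun q => pairVec z q.1 q.2

theorem mem_cutVertices {z b : ι → ℝ} : b ∈ cutVertices z ↔
    (∃ j, z j ≤ 0 ∧ Pi.single j 1 = b) ∨ ∃ j k, (0 < z j ∧ z k < 0) ∧ pairVec z j k = b := by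
  simp [cutVertices]

theorem pairVec_dotProduct {z : ι → ℝ} {j k : ι} (hjk : z j ≠ z k) (x : ι → ℝ) :
    pairVec z j k ⬝ᵥ x = (z j * x k - z k * x j) / (z j - z k) := by
  have : z j - z k ≠ 0 := sub_ne_zero.2 hjk
  simp only [pairVec, add_dotProduct, smul_dotProduct, single_one_dotProduct, smul_eq_mul]
  field_simp
  ring

theorem pairVec_mem_stdSimplex {z : ι → ℝ} {j k : ι} (hj : 0 ≤ z j) (hk : z k < 0) :
    pairVec z j k ∈ stdSimplex ℝ ι := by
  have hpos : 0 < z j - z k := by linarith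
  refine convex_stdSimplex ℝ ι (single_mem_stdSimplex ℝ j) (single_mem_stdSimplex ℝ k)
    (div_nonneg (by linarith) hpos.le) (div_nonneg hj hpos.le) ?_
  field_simp
  ring

theorem mem_stdSimplex_of_mem_cutVertices {z b : ι → ℝ} (hb : b ∈ cutVertices z) :
    b ∈ stdSimplex ℝ ι := by
  rcases mem_cutVertices.1 hb with ⟨j, -, rfl⟩ | ⟨j, k, ⟨hj, hk⟩, rfl⟩
  · exact single_mem_stdSimplex ℝ j
  · exact pairVec_mem_stdSimplex hj.le hk

theorem card_filter_pos_le_two_of_mem_cutVertices {z b : ι → ℝ} (hb : b ∈ cutVertices z) :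
    (univ.filter fun l => 0 < b l).card ≤ 2 := by
  rcases mem_cutVertices.1 hb with ⟨j, -, rfl⟩ | ⟨j, k, -, rfl⟩
  · exact card_filter_pos_le_two (j := j) (k := j) fun l hl _ => Pi.single_eq_of_ne hl 1
  · refine card_filter_pos_le_two (j := j) (k := k) fun l hlj hlk => ?_
    simp [pairVec, Pi.single_eq_of_ne hlj, Pi.single_eq_of_ne hlk]

theorem dotProduct_nonpos_of_mem_cutVertices {z b : ι → ℝ} (hb : b ∈ cutVertices z) :
    b ⬝ᵥ z ≤ 0 := by
  rcases mem_cutVertices.1 hb with ⟨j, hj, rfl⟩ | ⟨j, k, ⟨hj, hk⟩, rfl⟩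
  · rwa [single_one_dotProduct]
  · rw [pairVec_dotProduct (by linarith), mul_comm, sub_self, zero_div]

theorem exists_nonneg_forall_lt_mul_of_dotProduct_neg {z w : ι → ℝ}
    (h : ∀ b ∈ cutVertices z, b ⬝ᵥ w < 0) : ∃ c, 0 ≤ c ∧ ∀ j, w j < c * z j := by
  refine exists_nonneg_forall_lt_mul (fun j hj => ?_) fun j k hj hk => ?_
  · simpa [single_one_dotProduct] using h _ (mem_cutVertices.2 (Or.inl ⟨j, hj, rfl⟩))
  · have := h _ (mem_cutVertices.2 (Or.inr ⟨j, k, ⟨hj, hk⟩, rfl⟩))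
    rw [pairVec_dotProduct (by linarith), div_lt_iff₀ (by linarith), zero_mul] at this
    linarith

end Vertices

section Operator

variable {F : (ι → ℝ) → ι → ℝ}

theorem apply_le_apply_add_norm_sub (hmono : Monotone F)
    (hadd : ∀ (x : ι → ℝ) (c : ℝ), F (x + c • (1 : ι → ℝ)) = F x + c • 1)
    (x y : ι → ℝ) (i : ι) : F x i ≤ F y i + ‖x - y‖ := by
  have hle : x ≤ y + ‖x - y‖ • (1 : ι → ℝ) := fun l => by
    have := (Real.le_norm_self _).trans (norm_le_pi_norm (x - y) l)
    simp only [Pi.sub_apply, Pi.add_apply, Pi.smul_apply, Pi.one_apply, smul_eq_mul,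
      mul_one] at this ⊢
    linarith
  simpa [hadd] using hmono hle i

theorem exists_apply_sub_mul_le (hmono : Monotone F)
    (hadd : ∀ (x : ι → ℝ) (c : ℝ), F (x + c • (1 : ι → ℝ)) = F x + c • 1)
    (hpos : ∀ (c : ℝ), 0 ≤ c → ∀ x : ι → ℝ, F (c • x) = c • F x)
    (x z : ι → ℝ) (i : ι) {c : ℝ} (hc : 0 ≤ c) : ∃ j, F x i - c * F z i ≤ x j - c * z j := by
  obtain ⟨j, -, hj⟩ := univ.exists_max_image (fun j => x j - c * z j) ⟨i, mem_univ i⟩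
  refine ⟨j, ?_⟩
  have hle : x ≤ c • z + (x j - c * z j) • (1 : ι → ℝ) := fun l => by
    have := hj l (mem_univ l)
    simp only [Pi.add_apply, Pi.smul_apply, Pi.one_apply, smul_eq_mul, mul_one]
    linarith
  have := hmono hle i
  simp only [hadd, hpos c hc, Pi.add_apply, Pi.smul_apply, Pi.one_apply, smul_eq_mul,
    mul_one] at this
  linarith

variable [DecidableEq ι]

theorem exists_mem_cutVertices_apply_le_dotProduct (hmono : Monotone F)
    (hadd : ∀ (x : ι → ℝ) (c : ℝ), F (x + c • (1 : ι → ℝ)) = F x + c • 1)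
    (hpos : ∀ (c : ℝ), 0 ≤ c → ∀ x : ι → ℝ, F (c • x) = c • F x)
    {z : ι → ℝ} {i : ι} (hz : F z i = 0) (x : ι → ℝ) :
    ∃ b ∈ cutVertices z, F x i ≤ b ⬝ᵥ x := by
  by_contra! hlt
  obtain ⟨c, hc, hw⟩ := exists_nonneg_forall_lt_mul_of_dotProduct_neg (z := z)
    (w := x - F x i • 1) fun b hb => by
      rw [dotProduct_sub_smul_one (mem_stdSimplex_of_mem_cutVertices hb)]
      linarith [hlt b hb]
  obtain ⟨j, hj⟩ := exists_apply_sub_mul_le hmono hadd hpos x z i hc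
  have := hw j
  simp only [hz, mul_zero, sub_zero, Pi.sub_apply, Pi.smul_apply, Pi.one_apply, smul_eq_mul,
    mul_one] at this hj
  linarith

theorem dotProduct_le_apply_add_mul_norm (hmono : Monotone F)
    (hadd : ∀ (x : ι → ℝ) (c : ℝ), F (x + c • (1 : ι → ℝ)) = F x + c • 1)
    (hpos : ∀ (c : ℝ), 0 ≤ c → ∀ x : ι → ℝ, F (c • x) = c • F x)
    {x u y b : ι → ℝ} {i : ι} (hb : b ∈ cutVertices (y - F y i • 1)) (hxu : ‖x‖ • u = x)
    {δ : ℝ} (hδ : 2 * ‖u - y‖ ≤ δ) : b ⬝ᵥ x ≤ F x i + δ * ‖x‖ := by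
  have hbΔ := mem_stdSimplex_of_mem_cutVertices hb
  have hby : b ⬝ᵥ y ≤ F y i := by
    have := dotProduct_nonpos_of_mem_cutVertices hb
    rw [dotProduct_sub_smul_one hbΔ] at this
    linarith
  have hbu : b ⬝ᵥ u ≤ F u i + δ := by
    have hnear := dotProduct_le_norm hbΔ (u - y)
    have hlip := apply_le_apply_add_norm_sub hmono hadd y u i
    rw [dotProduct_sub] at hnear
    rw [norm_sub_rev] at hlip
    linarith
  have hFx : F x i = ‖x‖ * F u i := by
    simpa [hxu] using congrFun (hpos ‖x‖ (norm_nonneg x) u) i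
  calc b ⬝ᵥ x = ‖x‖ * b ⬝ᵥ u := by rw [← smul_eq_mul, ← dotProduct_smul, hxu]
    _ ≤ ‖x‖ * (F u i + δ) := mul_le_mul_of_nonneg_left hbu (norm_nonneg x)
    _ = F x i + δ * ‖x‖ := by rw [hFx]; ring

end Operator

end Shapley

open Shapley in
theorem stmt18_general {n : ℕ} (F : (Fin n → ℝ) → Fin n → ℝ)
    (hmono : Monotone F)
    (hadd : ∀ (x : Fin n → ℝ) (c : ℝ), F (x + c • (1 : Fin n → ℝ)) = F x + c • 1)
    (hpos : ∀ (c : ℝ), 0 ≤ c → ∀ x : Fin n → ℝ, F (c • x) = c • F x)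
    (ε : ℝ) (hε : 0 < ε) :
    ∃ G : (Fin n → ℝ) → Fin n → ℝ,
      (∀ (x : Fin n → ℝ) (i : Fin n), F x i ≤ G x i ∧ G x i ≤ F x i + ε * ‖x‖) ∧
      ∀ i : Fin n, ∃ (A : Finset (Fin n → ℝ)) (B : (Fin n → ℝ) → Finset (Fin n → ℝ)),
        A.Nonempty ∧
        (∀ a ∈ A, ∀ b ∈ B a,
          (∀ j, 0 ≤ b j) ∧ (∑ j, b j = 1) ∧
            (Finset.univ.filter fun j => 0 < b j).card ≤ 2) ∧
        ∀ x : Fin n → ℝ,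
          IsLeast {r : ℝ | ∃ a ∈ A,
            IsGreatest {s : ℝ | ∃ b ∈ B a, s = ∑ j, b j * x j} r} (G x i) := by
  classical
  obtain ⟨N, hN⟩ := exists_finset_forall_norm_sub_lt (E := Fin n → ℝ) (half_pos hε)
  set A : Fin n → Finset (Fin n → ℝ) := fun i => N.image fun y => y - F y i • 1
  have hA : ∀ i, (A i).Nonempty := fun i =>
    let ⟨y, hy, _⟩ := hN 0 (by simp)
    ⟨_, mem_image_of_mem _ hy⟩
  have hA0 : ∀ i, ∀ a ∈ A i, F a i = 0 := by
    rintro i _ ha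
    obtain ⟨y, -, rfl⟩ := mem_image.1 ha
    exact apply_sub_smul_one_apply_self hadd y i
  have hB : ∀ i, ∀ a ∈ A i, (cutVertices a).Nonempty := fun i a ha =>
    let ⟨b, hb, _⟩ := exists_mem_cutVertices_apply_le_dotProduct hmono hadd hpos (hA0 i a ha) 0
    ⟨b, hb⟩
  choose G hG using fun x i => exists_isLeast_minimax (hA i) (hB i) (· ⬝ᵥ x)
  refine ⟨G, fun x i => ⟨?_, ?_⟩, fun i => ⟨A i, cutVertices, hA i, fun a _ b hb =>
    ⟨(mem_stdSimplex_of_mem_cutVertices hb).1, (mem_stdSimplex_of_mem_cutVertices hb).2,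
      card_filter_pos_le_two_of_mem_cutVertices hb⟩, fun x => hG x i⟩⟩
  · obtain ⟨a, ha, hGa⟩ := (hG x i).1
    obtain ⟨b, hb, hFb⟩ :=
      exists_mem_cutVertices_apply_le_dotProduct hmono hadd hpos (hA0 i a ha) x
    exact hFb.trans (hGa.2 ⟨b, hb, rfl⟩)
  · obtain ⟨u, hu, hxu⟩ := exists_norm_le_one_norm_smul_eq x
    obtain ⟨y, hy, hyu⟩ := hN u hu
    have ha : y - F y i • 1 ∈ A i := mem_image_of_mem _ hy
    obtain ⟨r, hr⟩ := exists_isGreatest_image (hB i _ ha) (· ⬝ᵥ x)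
    obtain ⟨b, hb, rfl⟩ := hr.1
    exact ((hG x i).2 ⟨_, ha, hr⟩).trans
      (dotProduct_le_apply_add_mul_norm hmono hadd hpos hb hxu (by linarith))

/-- Let `F : ℝⁿ → ℝⁿ` be a payment-free Shapley operator (monotone, additively
homogeneous and positively homogeneous), and let `ε > 0`. Then there is a map `G : ℝⁿ → ℝⁿ`
with `F_i x ≤ G_i x ≤ F_i x + ε ‖x‖_∞` for all `x` and `i`, such that each coordinate of `G`
is a finite minimax `G_i x = min_{a ∈ A_i} max_{b ∈ B_{i,a}} ⟨b, x⟩`, where the `A_i` and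
`B_{i,a}` are finite sets and each `b` is a stochastic vector with at most two positive
coordinates. (Here, `‖x‖` on `Fin n → ℝ` is the sup-norm.) -/
theorem stmt18 {n : ℕ} (hn : 0 < n) (F : (Fin n → ℝ) → Fin n → ℝ)
    (hmono : Monotone F)
    (hadd : ∀ (x : Fin n → ℝ) (c : ℝ), F (x + c • (1 : Fin n → ℝ)) = F x + c • 1)
    (hpos : ∀ (c : ℝ), 0 ≤ c → ∀ x : Fin n → ℝ, F (c • x) = c • F x)
    (ε : ℝ) (hε : 0 < ε) :
    ∃ G : (Fin n → ℝ) → Fin n → ℝ,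
      (∀ (x : Fin n → ℝ) (i : Fin n), F x i ≤ G x i ∧ G x i ≤ F x i + ε * ‖x‖) ∧
      ∀ i : Fin n, ∃ (A : Finset (Fin n → ℝ)) (B : (Fin n → ℝ) → Finset (Fin n → ℝ)),
        A.Nonempty ∧
        (∀ a ∈ A, ∀ b ∈ B a,
          (∀ j, 0 ≤ b j) ∧ (∑ j, b j = 1) ∧
            (Finset.univ.filter fun j => 0 < b j).card ≤ 2) ∧
        ∀ x : Fin n → ℝ,
          IsLeast {r : ℝ | ∃ a ∈ A,
            IsGreatest {s : ℝ | ∃ b ∈ B a, s = ∑ j, b j * x j} r} (G x i) :=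
  stmt18_general F hmono hadd hpos ε hε
end

section
/- Let t : ℝⁿ → ℝ be the map t(z) = max_{1 ≤ i ≤ n} z_i and let t⁺(z) = max(t(z), 0). A map f : ℝⁿ → ℝⁿ is monotone and additively homogeneous if, and only if, t(f(x) − f(y)) ≤ t(x − y) for all x, y ∈ ℝⁿ; and f is monotone and additively subhomogeneous (f(x + λ𝟙) ≤ f(x) + λ𝟙 for all λ ≥ 0) if, and only if, t⁺(f(x) − f(y)) ≤ t⁺(x − y) for all x, y ∈ ℝⁿ. -/
/-- With `t z = max_i z i` and `t⁺ z = max (t z) 0` on `ℝⁿ`, a map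
`f : ℝⁿ → ℝⁿ` is monotone and additively homogeneous iff it is nonexpansive with respect to
`t`, and it is monotone and additively subhomogeneous iff it is nonexpansive with respect
to `t⁺`. -/
theorem stmt19 {n : ℕ} (hn : 0 < n) (f : (Fin n → ℝ) → Fin n → ℝ) :
    ((Monotone f ∧
        ∀ (x : Fin n → ℝ) (c : ℝ), f (x + c • (1 : Fin n → ℝ)) = f x + c • 1) ↔
      ∀ x y : Fin n → ℝ, (⨆ i, (f x i - f y i)) ≤ ⨆ i, (x i - y i)) ∧
    ((Monotone f ∧
        ∀ (x : Fin n → ℝ) (c : ℝ), 0 ≤ c → f (x + c • (1 : Fin n → ℝ)) ≤ f x + c • 1) ↔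
      ∀ x y : Fin n → ℝ,
        max (⨆ i, (f x i - f y i)) 0 ≤ max (⨆ i, (x i - y i)) 0) := by
  haveI : Nonempty (Fin n) := Fin.pos_iff_nonempty.mp hn
  have hle : ∀ (z : Fin n → ℝ) i, z i ≤ ⨆ j, z j := fun z i =>
    le_ciSup (Set.Finite.bddAbove (Set.finite_range z)) i
  constructor
  · constructor
    · rintro ⟨hm, hh⟩ x y
      set c := ⨆ i, (x i - y i) with hc
      have hxy : x ≤ y + c • 1 := by
        intro i
        have := hle (fun i => x i - y i) i
        simp only [Pi.add_apply, Pi.smul_apply, Pi.one_apply, smul_eq_mul, mul_one]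
        simpa using by linarith
      have hfm := hm hxy
      rw [hh] at hfm
      refine ciSup_le fun i => ?_
      have h2 := hfm i
      simp only [Pi.add_apply, Pi.smul_apply, Pi.one_apply, smul_eq_mul, mul_one] at h2
      linarith
    · intro h
      have hmono : Monotone f := by
        intro x y hxy i
        have h1 := h x y
        have h2 : (⨆ i, (x i - y i)) ≤ 0 := ciSup_le fun i => by linarith [hxy i]
        have h3 := hle (fun i => f x i - f y i) i
        linarith
      refine ⟨hmono, fun x c => ?_⟩
      have h1 := h (x + c • 1) x
      have h2 := h x (x + c • 1)
      have e1 : (⨆ i, ((x + c • (1 : Fin n → ℝ)) i - x i)) = c := by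
        have : (fun i => (x + c • (1 : Fin n → ℝ)) i - x i) = fun _ => c := by
          funext i; simp [smul_eq_mul]
        rw [this, ciSup_const]
      have e2 : (⨆ i, (x i - (x + c • (1 : Fin n → ℝ)) i)) = -c := by
        have : (fun i => x i - (x + c • (1 : Fin n → ℝ)) i) = fun _ => -c := by
          funext i; simp [smul_eq_mul]
        rw [this, ciSup_const]
      rw [e1] at h1
      rw [e2] at h2
      funext i
      have h3 := hle (fun i => f (x + c • 1) i - f x i) i
      have h4 := hle (fun i => f x i - f (x + c • 1) i) i
      simp only [Pi.add_apply, Pi.smul_apply, Pi.one_apply, smul_eq_mul, mul_one]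
      linarith
  · constructor
    · rintro ⟨hm, hh⟩ x y
      set c := max (⨆ i, (x i - y i)) 0 with hc
      have hc0 : 0 ≤ c := le_max_right _ _
      have hxy : x ≤ y + c • 1 := by
        intro i
        have h0 := hle (fun i => x i - y i) i
        have h1 : (⨆ i, (x i - y i)) ≤ c := le_max_left _ _
        simp only [Pi.add_apply, Pi.smul_apply, Pi.one_apply, smul_eq_mul, mul_one]
        linarith
      have hfm := le_trans (hm hxy) (hh y c hc0)
      refine max_le (ciSup_le fun i => ?_) hc0
      have h2 := hfm i
      simp only [Pi.add_apply, Pi.smul_apply, Pi.one_apply, smul_eq_mul, mul_one] at h2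
      linarith
    · intro h
      have hmono : Monotone f := by
        intro x y hxy i
        have h1 := h x y
        have h2 : (⨆ i, (x i - y i)) ≤ 0 := ciSup_le fun i => by linarith [hxy i]
        rw [max_eq_right h2] at h1
        have h3 := hle (fun i => f x i - f y i) i
        have h4 : (⨆ i, (f x i - f y i)) ≤ 0 := le_trans (le_max_left _ _) h1
        linarith
      refine ⟨hmono, fun x c hc0 => ?_⟩
      have h1 := h (x + c • 1) x
      have e1 : (⨆ i, ((x + c • (1 : Fin n → ℝ)) i - x i)) = c := by
        have : (fun i => (x + c • (1 : Fin n → ℝ)) i - x i) = fun _ => c := by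
          funext i; simp [smul_eq_mul]
        rw [this, ciSup_const]
      rw [e1, max_eq_left hc0] at h1
      intro i
      have h3 := hle (fun i => f (x + c • 1) i - f x i) i
      have h4 : (⨆ i, (f (x + c • 1) i - f x i)) ≤ c := le_trans (le_max_left _ _) h1
      simp only [Pi.add_apply, Pi.smul_apply, Pi.one_apply, smul_eq_mul, mul_one]
      linarith
end
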